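/- arXiv:math/0101013 — 8 statements merged into one kernel-verified Lean document; each statement's English description precedes it below -/
import Mathlib

section
/- For every real number a, the improper integral ∫_{0}^{∞} sin(a x)/x dx converges and equals π/2 if a > 0, equals 0 if a = 0, and equals -π/2 if a < 0. -/
/-!
Write `sin x / x = ∫₀^∞ e^{-tx} sin x dt` and exchange the order of integration (Fubini is
legitimate on `(0, R] × (0, ∞)` since `∫₀^∞ |e^{-tx} sin x| dt = |sin x| / x ≤ 1`). The inner
integral `∫₀^R e^{-tx} sin x dx` is elementary and equals `1 / (1 + t²)` minus a tail bounded by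
`e^{-tR}`, so `∫₀^R sin x / x dx = π / 2 + O(1 / R)`. The case of general `a` follows by the
substitution `u = |a| x` and the oddness of `sin`.
-/

open Filter Real MeasureTheory Set

lemma integral_exp_neg_mul_mul_Ioi {x : ℝ} (hx : 0 < x) (c : ℝ) :
    ∫ t in Ioi (0 : ℝ), exp (-t * x) * c = c / x := by
  have h := integral_exp_mul_Ioi (neg_neg_iff_pos.2 hx) 0
  simp_rw [integral_mul_const, neg_mul_comm _ x, mul_comm _ (-x), h, mul_zero, exp_zero]
  field_simp

/-- For `t > 0` this is `∫_R^∞ e^{-tx} sin x dx`. -/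
noncomputable def laplaceSinTail (t R : ℝ) : ℝ :=
  exp (-t * R) * (cos R + t * sin R) / (1 + t ^ 2)

lemma hasDerivAt_laplaceSinTail (t x : ℝ) :
    HasDerivAt (laplaceSinTail t) (-(exp (-t * x) * sin x)) x := by
  have hexp : HasDerivAt (fun x => exp (-t * x)) (exp (-t * x) * -t) x :=
    ((hasDerivAt_id x).const_mul (-t)).exp.congr_deriv (by simp)
  have htrig : HasDerivAt (fun x => cos x + t * sin x) (-sin x + t * cos x) x :=
    (hasDerivAt_cos x).add ((hasDerivAt_sin x).const_mul t)
  refine ((hexp.mul htrig).div_const (1 + t ^ 2)).congr_deriv ?_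
  field_simp
  ring

lemma integral_exp_neg_mul_sin (t R : ℝ) :
    ∫ x in (0 : ℝ)..R, exp (-t * x) * sin x = (1 + t ^ 2)⁻¹ - laplaceSinTail t R := by
  rw [intervalIntegral.integral_eq_sub_of_hasDerivAt (f := -laplaceSinTail t)
    (fun x _ => by simpa using (hasDerivAt_laplaceSinTail t x).neg)
    (Continuous.intervalIntegrable (by fun_prop) _ _)]
  simp [laplaceSinTail]
  ring

lemma abs_laplaceSinTail_le (t R : ℝ) : |laplaceSinTail t R| ≤ exp (-R * t) := by
  have htrig : |cos R + t * sin R| ≤ 1 + t ^ 2 := by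
    apply abs_le_of_sq_le_sq _ (by positivity)
    nlinarith [sin_sq_add_cos_sq R, sq_nonneg (t * cos R - sin R), sq_nonneg t]
  have hpos : 0 < 1 + t ^ 2 := by positivity
  rw [laplaceSinTail, abs_div, abs_mul, abs_of_pos (exp_pos _), abs_of_pos hpos,
    div_le_iff₀ hpos, show -R * t = -t * R by ring]
  exact mul_le_mul_of_nonneg_left htrig (exp_pos _).le

lemma integrableOn_laplaceSinTail {R : ℝ} (hR : 0 < R) :
    IntegrableOn (fun t => laplaceSinTail t R) (Ioi 0) :=
  (exp_neg_integrableOn_Ioi 0 hR).mono'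
    (Continuous.aestronglyMeasurable <| by
      unfold laplaceSinTail; exact Continuous.div (by fun_prop) (by fun_prop) (by intro; positivity))
    (Eventually.of_forall fun t => abs_laplaceSinTail_le t R)

lemma tendsto_integral_laplaceSinTail :
    Tendsto (fun R => ∫ t in Ioi (0 : ℝ), laplaceSinTail t R) atTop (nhds 0) := by
  refine squeeze_zero_norm' ?_ tendsto_inv_atTop_zero
  filter_upwards [eventually_gt_atTop 0] with R hR
  calc ‖∫ t in Ioi (0 : ℝ), laplaceSinTail t R‖
      ≤ ∫ t in Ioi (0 : ℝ), exp (-R * t) :=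
        norm_integral_le_of_norm_le (exp_neg_integrableOn_Ioi 0 hR)
          (Eventually.of_forall fun t => abs_laplaceSinTail_le t R)
    _ = R⁻¹ := by simpa [mul_comm] using integral_exp_neg_mul_mul_Ioi hR 1

lemma integrable_exp_neg_mul_sin_prod (R : ℝ) :
    Integrable (Function.uncurry fun x t => exp (-t * x) * sin x)
      ((volume.restrict (Ioc 0 R)).prod (volume.restrict (Ioi 0))) := by
  have hmeas : AEStronglyMeasurable (Function.uncurry fun x t => exp (-t * x) * sin x)
      ((volume.restrict (Ioc 0 R)).prod (volume.restrict (Ioi 0))) :=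
    (by fun_prop : Continuous fun p : ℝ × ℝ => exp (-p.2 * p.1) * sin p.1).aestronglyMeasurable
  refine (integrable_prod_iff hmeas).2 ⟨?_, ?_⟩
  · filter_upwards [ae_restrict_mem measurableSet_Ioc] with x hx
    simpa [mul_comm] using (exp_neg_integrableOn_Ioi 0 hx.1).mul_const (sin x)
  · refine Integrable.mono' (g := fun _ => 1) (integrableOn_const measure_Ioc_lt_top.ne)
      hmeas.norm.integral_prod_right' ?_
    filter_upwards [ae_restrict_mem measurableSet_Ioc] with x hx
    have hsin : |sin x| ≤ x := abs_sin_le_abs.trans_eq (abs_of_pos hx.1)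
    simp_rw [Function.uncurry_apply_pair, norm_mul, norm_of_nonneg (exp_pos _).le,
      integral_exp_neg_mul_mul_Ioi hx.1, norm_div, norm_of_nonneg hx.1.le, norm_norm,
      Real.norm_eq_abs]
    exact div_le_one_of_le₀ hsin hx.1.le

lemma integral_sin_div_eq_pi_div_two_sub {R : ℝ} (hR : 0 < R) :
    ∫ x in (0 : ℝ)..R, sin x / x = π / 2 - ∫ t in Ioi (0 : ℝ), laplaceSinTail t R := by
  calc ∫ x in (0 : ℝ)..R, sin x / x
      = ∫ x in Ioc 0 R, ∫ t in Ioi (0 : ℝ), exp (-t * x) * sin x := by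
        rw [intervalIntegral.integral_of_le hR.le]
        exact setIntegral_congr_fun measurableSet_Ioc fun x hx =>
          (integral_exp_neg_mul_mul_Ioi hx.1 _).symm
    _ = ∫ t in Ioi (0 : ℝ), ∫ x in Ioc 0 R, exp (-t * x) * sin x :=
        integral_integral_swap (integrable_exp_neg_mul_sin_prod R)
    _ = ∫ t in Ioi (0 : ℝ), ((1 + t ^ 2)⁻¹ - laplaceSinTail t R) := by
        simp_rw [← intervalIntegral.integral_of_le hR.le, integral_exp_neg_mul_sin]
    _ = π / 2 - ∫ t in Ioi (0 : ℝ), laplaceSinTail t R := by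
        rw [integral_sub integrable_inv_one_add_sq.integrableOn (integrableOn_laplaceSinTail hR),
          integral_Ioi_inv_one_add_sq, arctan_zero, sub_zero]

theorem tendsto_integral_sin_div :
    Tendsto (fun R => ∫ x in (0 : ℝ)..R, sin x / x) atTop (nhds (π / 2)) := by
  have h := tendsto_integral_laplaceSinTail.const_sub (π / 2)
  rw [sub_zero] at h
  refine h.congr' ?_
  filter_upwards [eventually_gt_atTop 0] with R hR
  exact (integral_sin_div_eq_pi_div_two_sub hR).symm

lemma integral_sin_mul_div {c : ℝ} (hc : c ≠ 0) (R : ℝ) :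
    ∫ x in (0 : ℝ)..R, sin (c * x) / x = ∫ u in (0 : ℝ)..c * R, sin u / u := by
  have h (x : ℝ) : sin (c * x) / x = c * (sin (c * x) / (c * x)) := by
    rcases eq_or_ne x 0 with rfl | hx
    · simp
    · field_simp
  simp_rw [h, intervalIntegral.integral_const_mul,
    intervalIntegral.integral_comp_mul_left (fun u => sin u / u) hc, mul_zero, smul_eq_mul,
    mul_inv_cancel_left₀ hc]

lemma tendsto_integral_sin_mul_div_of_pos {a : ℝ} (ha : 0 < a) :
    Tendsto (fun R => ∫ x in (0 : ℝ)..R, sin (a * x) / x) atTop (nhds (π / 2)) := by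
  simp_rw [integral_sin_mul_div ha.ne']
  exact tendsto_integral_sin_div.comp (tendsto_id.const_mul_atTop ha)

theorem stmt1 (a : ℝ) :
    Tendsto (fun R : ℝ => ∫ x in (0:ℝ)..R, Real.sin (a * x) / x) atTop
      (nhds (if 0 < a then π / 2 else if a = 0 then 0 else -(π / 2))) := by
  rcases lt_trichotomy a 0 with ha | rfl | ha
  · rw [if_neg ha.not_gt, if_neg ha.ne]
    simpa only [neg_mul, sin_neg, neg_div, intervalIntegral.integral_neg, neg_neg] using
      (tendsto_integral_sin_mul_div_of_pos (neg_pos.2 ha)).neg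
  · simp
  · rw [if_pos ha]
    exact tendsto_integral_sin_mul_div_of_pos ha
end

section
/- For all real numbers p > 0 and q > 0, the improper integral ∫_{0}^{∞} (cos(p x) − cos(q x))/x dx converges and equals log(q/p). -/
open Filter Real intervalIntegral MeasureTheory Topology

noncomputable def fr (x : ℝ) : ℝ := (Real.cos x - 1) / x

lemma fr_continuous : Continuous fr := by
  rw [continuous_iff_continuousAt]
  intro x
  rcases eq_or_ne x 0 with rfl | hx
  · have h : HasDerivAt Real.cos (-Real.sin 0) 0 := Real.hasDerivAt_cos 0
    have h2 := hasDerivAt_iff_tendsto_slope.mp h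
    have hslope : (slope Real.cos 0) = fr := by
      funext y
      simp [slope, fr, div_eq_inv_mul]
    rw [hslope] at h2
    have htend : Tendsto fr (𝓝 0) (𝓝 0) := by
      have ha : Tendsto fr (𝓝[≠] (0:ℝ)) (𝓝 0) := by simpa using h2
      have hb : Tendsto fr (pure (0:ℝ)) (𝓝 0) := by
        have hz0 : fr 0 = 0 := by simp [fr]
        rw [tendsto_pure_left]
        intro s hs
        simpa [hz0] using mem_of_mem_nhds hs
      have := ha.sup hb
      rwa [nhdsNE_sup_pure] at this
    have hz : fr 0 = 0 := by simp [fr]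
    simpa [ContinuousAt, hz] using htend
  · exact ((Real.continuous_cos.sub continuous_const).continuousAt).div
      continuousAt_id hx

lemma fr_subst (t : ℝ) (ht : 0 < t) (R : ℝ) :
    ∫ x in (0:ℝ)..R, (Real.cos (t * x) - 1) / x = ∫ u in (0:ℝ)..(t * R), fr u := by
  have h1 : (fun x => (Real.cos (t * x) - 1) / x) = fun x => t * fr (t * x) := by
    funext x
    rcases eq_or_ne x 0 with rfl | hx
    · simp [fr]
    · rw [fr]
      field_simp
  rw [h1, intervalIntegral.integral_const_mul,
    intervalIntegral.integral_comp_mul_left fr ht.ne', mul_zero, smul_eq_mul,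
    ← mul_assoc, mul_inv_cancel₀ ht.ne', one_mul]

lemma ibp_bound (a b : ℝ) (ha : 0 < a) (hab : a ≤ b) :
    |∫ x in a..b, Real.cos x / x| ≤ 2 / a := by
  have hb : 0 < b := lt_of_lt_of_le ha hab
  have hmem : ∀ x ∈ Set.uIcc a b, x ≠ 0 := by
    intro x hx
    rw [Set.uIcc_of_le hab] at hx
    exact (lt_of_lt_of_le ha hx.1).ne'
  have h0 : (0:ℝ) ∉ Set.uIcc a b := fun h => hmem 0 h rfl
  -- integration by parts with u = x⁻¹, v = sin
  have hu : ∀ x ∈ Set.uIcc a b, HasDerivAt (fun y : ℝ => y⁻¹) (-(x^2)⁻¹) x := by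
    intro x hx
    simpa using hasDerivAt_inv (hmem x hx)
  have hv : ∀ x ∈ Set.uIcc a b, HasDerivAt Real.sin (Real.cos x) x :=
    fun x _ => Real.hasDerivAt_sin x
  have hu' : IntervalIntegrable (fun x : ℝ => -(x^2)⁻¹) volume a b := by
    apply ContinuousOn.intervalIntegrable
    intro x hx
    exact ((continuousOn_id.pow 2).inv₀ (fun y hy => pow_ne_zero 2 (hmem y hy)) x hx).neg
  have hv' : IntervalIntegrable Real.cos volume a b :=
    Real.continuous_cos.intervalIntegrable a b
  have hparts := intervalIntegral.integral_mul_deriv_eq_deriv_mul hu hv hu' hv'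
  have heq : (∫ x in a..b, Real.cos x / x)
      = b⁻¹ * Real.sin b - a⁻¹ * Real.sin a + ∫ x in a..b, Real.sin x / x ^ 2 := by
    have : (fun x => Real.cos x / x) = fun x => x⁻¹ * Real.cos x := by
      funext x; rw [div_eq_inv_mul]
    rw [this, hparts]
    have : (∫ x in a..b, -(x^2)⁻¹ * Real.sin x) = -∫ x in a..b, Real.sin x / x ^ 2 := by
      rw [← intervalIntegral.integral_neg]
      congr 1
      funext x
      rw [div_eq_inv_mul]
      ring
    rw [this]
    ring
  have hsin : |∫ x in a..b, Real.sin x / x ^ 2| ≤ a⁻¹ - b⁻¹ := by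
    have hle : |∫ x in a..b, Real.sin x / x ^ 2| ≤ ∫ x in a..b, (x:ℝ) ^ (-2 : ℤ) := by
      calc |∫ x in a..b, Real.sin x / x ^ 2|
          ≤ ∫ x in a..b, |Real.sin x / x ^ 2| := by
            simpa [Real.norm_eq_abs] using
              intervalIntegral.norm_integral_le_integral_norm (f := fun x => Real.sin x / x ^ 2) hab
        _ ≤ ∫ x in a..b, (x:ℝ) ^ (-2 : ℤ) := by
            apply intervalIntegral.integral_mono_on hab
            · apply ContinuousOn.intervalIntegrable
              intro x hx
              exact ((Real.continuous_sin.continuousOn.div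
                ((continuousOn_id.pow 2)) (fun y hy => pow_ne_zero 2 (hmem y hy))) x hx).abs
            · apply ContinuousOn.intervalIntegrable
              intro x hx
              exact (continuousOn_id.zpow₀ (-2) (fun y hy => Or.inl (hmem y hy))) x hx
            · intro x hx
              have hx0 : x ≠ 0 := hmem x (by rw [Set.uIcc_of_le hab]; exact hx)
              rw [abs_div, zpow_neg, zpow_two]
              rw [div_le_iff₀ (by positivity)]
              calc |Real.sin x| ≤ 1 := Real.abs_sin_le_one x
                _ ≤ (x * x)⁻¹ * |x ^ 2| := by
                    rw [abs_of_nonneg (sq_nonneg x), sq]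
                    rw [inv_mul_cancel₀ (by exact mul_ne_zero hx0 hx0)]
    have hz : (∫ x in a..b, (x:ℝ) ^ (-2 : ℤ)) = a⁻¹ - b⁻¹ := by
      rw [integral_zpow (Or.inr ⟨by norm_num, h0⟩)]
      norm_num
      ring
    rw [hz] at hle
    exact hle
  rw [heq]
  have h1 : |b⁻¹ * Real.sin b| ≤ b⁻¹ := by
    rw [abs_mul, abs_of_nonneg (by positivity : (0:ℝ) ≤ b⁻¹)]
    calc b⁻¹ * |Real.sin b| ≤ b⁻¹ * 1 := by
          exact mul_le_mul_of_nonneg_left (Real.abs_sin_le_one b) (by positivity)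
      _ = b⁻¹ := mul_one _
  have h2 : |a⁻¹ * Real.sin a| ≤ a⁻¹ := by
    rw [abs_mul, abs_of_nonneg (by positivity : (0:ℝ) ≤ a⁻¹)]
    calc a⁻¹ * |Real.sin a| ≤ a⁻¹ * 1 := by
          exact mul_le_mul_of_nonneg_left (Real.abs_sin_le_one a) (by positivity)
      _ = a⁻¹ := mul_one _
  calc |b⁻¹ * Real.sin b - a⁻¹ * Real.sin a + ∫ x in a..b, Real.sin x / x ^ 2|
      ≤ |b⁻¹ * Real.sin b| + |a⁻¹ * Real.sin a| + |∫ x in a..b, Real.sin x / x ^ 2| := by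
        exact (abs_add_le _ _).trans (by gcongr; exact abs_sub _ _)
    _ ≤ b⁻¹ + a⁻¹ + (a⁻¹ - b⁻¹) := by gcongr
    _ = 2 / a := by field_simp; ring

theorem stmt2 (p q : ℝ) (hp : 0 < p) (hq : 0 < q) :
    Tendsto (fun R : ℝ => ∫ x in (0:ℝ)..R, (Real.cos (p * x) - Real.cos (q * x)) / x) atTop
      (nhds (Real.log (q / p))) := by
  -- Step 1: for R > 0 the integral equals log (q/p) + ∫_{qR}^{pR} cos u / u
  have key : ∀ R : ℝ, 0 < R →
      (∫ x in (0:ℝ)..R, (Real.cos (p * x) - Real.cos (q * x)) / x)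
        = Real.log (q / p) + ∫ u in (q*R)..(p*R), Real.cos u / u := by
    intro R hR
    have hsplit : (fun x => (Real.cos (p * x) - Real.cos (q * x)) / x)
        = fun x => (Real.cos (p * x) - 1) / x - (Real.cos (q * x) - 1) / x := by
      funext x; ring
    have hip : IntervalIntegrable (fun x => (Real.cos (p*x) - 1)/x) volume 0 R := by
      have : (fun x => (Real.cos (p*x) - 1)/x) = fun x => p * fr (p * x) := by
        funext x
        rcases eq_or_ne x 0 with rfl | hx
        · simp [fr]
        · rw [fr]; field_simp
      rw [this]
      exact ((continuous_const.mul (fr_continuous.comp (continuous_const.mul continuous_id)))).intervalIntegrable 0 R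
    have hiq : IntervalIntegrable (fun x => (Real.cos (q*x) - 1)/x) volume 0 R := by
      have : (fun x => (Real.cos (q*x) - 1)/x) = fun x => q * fr (q * x) := by
        funext x
        rcases eq_or_ne x 0 with rfl | hx
        · simp [fr]
        · rw [fr]; field_simp
      rw [this]
      exact ((continuous_const.mul (fr_continuous.comp (continuous_const.mul continuous_id)))).intervalIntegrable 0 R
    rw [hsplit, intervalIntegral.integral_sub hip hiq, fr_subst p hp R, fr_subst q hq R]
    have hch : (∫ u in (0:ℝ)..(p*R), fr u) - ∫ u in (0:ℝ)..(q*R), fr u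
        = ∫ u in (q*R)..(p*R), fr u := by
      rw [← intervalIntegral.integral_add_adjacent_intervals
        (fr_continuous.intervalIntegrable 0 (q*R)) (fr_continuous.intervalIntegrable (q*R) (p*R))]
      ring
    rw [hch]
    have h0 : (0:ℝ) ∉ Set.uIcc (q*R) (p*R) := by
      intro h
      rcases Set.mem_uIcc.mp h with ⟨h1, _⟩ | ⟨h1, _⟩
      · exact absurd h1 (not_le.mpr (by positivity))
      · exact absurd h1 (not_le.mpr (by positivity))
    have hmem : ∀ x ∈ Set.uIcc (q*R) (p*R), x ≠ 0 := fun x hx hx0 => h0 (hx0 ▸ hx)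
    have hcos : IntervalIntegrable (fun u => Real.cos u / u) volume (q*R) (p*R) := by
      apply ContinuousOn.intervalIntegrable
      exact Real.continuous_cos.continuousOn.div continuousOn_id hmem
    have hinv : IntervalIntegrable (fun u : ℝ => 1 / u) volume (q*R) (p*R) := by
      apply ContinuousOn.intervalIntegrable
      exact continuousOn_const.div continuousOn_id hmem
    have hfr : ∀ u ∈ Set.uIcc (q*R) (p*R), fr u = Real.cos u / u - 1 / u := by
      intro u hu
      rw [fr, sub_div]
    rw [intervalIntegral.integral_congr hfr, intervalIntegral.integral_sub hcos hinv,
      integral_one_div h0]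
    have : (p * R) / (q * R) = p / q := by
      field_simp
    rw [this, Real.log_div hq.ne' hp.ne', Real.log_div hp.ne' hq.ne']
    ring
  -- Step 2: the error term tends to 0
  have herr : Tendsto (fun R : ℝ => ∫ u in (q*R)..(p*R), Real.cos u / u) atTop (𝓝 0) := by
    set m := min p q with hm
    have hm0 : 0 < m := lt_min hp hq
    have hbound : ∀ R : ℝ, 0 < R →
        |∫ u in (q*R)..(p*R), Real.cos u / u| ≤ 2 / (m * R) := by
      intro R hR
      rcases le_total q p with hqp | hpq
      · have hb := ibp_bound (q*R) (p*R) (by positivity)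
          (mul_le_mul_of_nonneg_right hqp hR.le)
        calc |∫ u in (q*R)..(p*R), Real.cos u / u| ≤ 2 / (q*R) := hb
          _ ≤ 2 / (m * R) := by
              have h1 : (0:ℝ) < m * R := by positivity
              have h2 : m * R ≤ q * R :=
                mul_le_mul_of_nonneg_right (min_le_right p q) hR.le
              exact div_le_div_of_nonneg_left (by norm_num) h1 h2
      · have hb := ibp_bound (p*R) (q*R) (by positivity)
          (mul_le_mul_of_nonneg_right hpq hR.le)
        calc |∫ u in (q*R)..(p*R), Real.cos u / u|
            = |∫ u in (p*R)..(q*R), Real.cos u / u| := by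
              rw [intervalIntegral.integral_symm, abs_neg]
          _ ≤ 2 / (p*R) := hb
          _ ≤ 2 / (m * R) := by
              have h1 : (0:ℝ) < m * R := by positivity
              have h2 : m * R ≤ p * R :=
                mul_le_mul_of_nonneg_right (min_le_left p q) hR.le
              exact div_le_div_of_nonneg_left (by norm_num) h1 h2
    have hlim : Tendsto (fun R : ℝ => 2 / (m * R)) atTop (𝓝 0) := by
      apply Tendsto.div_atTop tendsto_const_nhds
      exact Tendsto.const_mul_atTop hm0 tendsto_id
    apply squeeze_zero_norm' _ hlim
    filter_upwards [eventually_gt_atTop 0] with R hR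
    simpa [Real.norm_eq_abs] using hbound R hR
  have : Tendsto (fun R : ℝ => Real.log (q/p) + ∫ u in (q*R)..(p*R), Real.cos u / u)
      atTop (𝓝 (Real.log (q/p))) := by
    simpa using tendsto_const_nhds.add herr
  apply this.congr'
  filter_upwards [eventually_gt_atTop 0] with R hR
  exact (key R hR).symm
end

section
/- For a > 0, the improper integral ∫_{0}^{∞} cos(a x²) cos(s x) dx converges for every real s and equals (1/2)·√(π/(2a))·(cos(s²/(4a)) + sin(s²/(4a))). -/
/-!
With `c = s² / (4a)` and `d = s / (2a)`, completing the square gives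
`cos (a x²) cos (s x) = re (e^{-ic} (e^{ia(x+d)²} + e^{ia(x-d)²})) / 2`. Since `u ↦ e^{iau²}` is
even, the shifts by `±d` cancel in the limit, and everything reduces to the Fresnel integral
`∫₀^∞ e^{iau²} du = √(π/(2a)) (1 + i) / 2`. That is the Gaussian integral
`∫₀^∞ e^{-bu²} du = √(π/b) / 2` at the boundary point `b = -ia` of the half-plane `0 < re b`:
after one integration by parts on `[1, ∞)` the integral converges absolutely and depends
continuously on `b` in the closed half-plane minus `0`, so the value extends from `0 < re b`.
-/
open Filter Real Set MeasureTheory Complex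
open scoped Topology

section ImproperGaussian

variable {b : ℂ}

lemma norm_cexp_neg_mul_sq_le_one (hb : 0 ≤ b.re) (x : ℝ) : ‖cexp (-b * x ^ 2)‖ ≤ 1 := by
  rw [norm_cexp_neg_mul_sq, Real.exp_le_one_iff, neg_mul, neg_nonpos]
  positivity

lemma hasDerivAt_neg_cexp_neg_mul_sq_div (hb : b ≠ 0) {x : ℝ} (hx : x ≠ 0) :
    HasDerivAt (fun y : ℝ => -cexp (-b * y ^ 2) / (2 * b * y))
      (cexp (-b * x ^ 2) + cexp (-b * x ^ 2) / (2 * b * x ^ 2)) x := by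
  have hxC : (x : ℂ) ≠ 0 := ofReal_ne_zero.mpr hx
  have hexp : HasDerivAt (fun z : ℂ => cexp (-b * z ^ 2)) (cexp (-b * x ^ 2) * (-b * (2 * x)))
      (x : ℂ) := by
    simpa using ((hasDerivAt_pow 2 (x : ℂ)).const_mul (-b)).cexp
  have hlin : HasDerivAt (fun z : ℂ => 2 * b * z) (2 * b) (x : ℂ) := by
    simpa using (hasDerivAt_id (x : ℂ)).const_mul (2 * b)
  have hC : HasDerivAt (fun z : ℂ => -cexp (-b * z ^ 2) / (2 * b * z))
      (cexp (-b * x ^ 2) + cexp (-b * x ^ 2) / (2 * b * x ^ 2)) (x : ℂ) := by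
    refine (hexp.fun_neg.fun_div hlin (by simp [hb, hxC])).congr_deriv ?_
    field_simp
    ring
  exact hC.comp_ofReal

lemma integral_one_cexp_neg_mul_sq (hb : b ≠ 0) {R : ℝ} (hR : 0 < R) :
    ∫ x in (1 : ℝ)..R, cexp (-b * x ^ 2) =
      cexp (-b) / (2 * b) - cexp (-b * R ^ 2) / (2 * b * R)
        - ∫ x in (1 : ℝ)..R, cexp (-b * x ^ 2) / (2 * b * x ^ 2) := by
  have hne : ∀ x ∈ uIcc (1 : ℝ) R, x ≠ 0 := fun x hx =>
    ((lt_min one_pos hR).trans_le hx.1).ne'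
  have hcont : ContinuousOn (fun x : ℝ => cexp (-b * x ^ 2) / (2 * b * x ^ 2)) (uIcc 1 R) :=
    (by fun_prop : Continuous fun x : ℝ => cexp (-b * x ^ 2)).continuousOn.div (by fun_prop)
      fun x hx => by simp [hb, hne x hx]
  have hint : IntervalIntegrable (fun x : ℝ => cexp (-b * x ^ 2)) volume 1 R :=
    (by fun_prop : Continuous fun x : ℝ => cexp (-b * x ^ 2)).intervalIntegrable _ _
  have ftc := intervalIntegral.integral_eq_sub_of_hasDerivAt
    (fun x hx => hasDerivAt_neg_cexp_neg_mul_sq_div hb (hne x hx))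
    (hint.add hcont.intervalIntegrable)
  rw [intervalIntegral.integral_add hint hcont.intervalIntegrable] at ftc
  rw [eq_sub_iff_add_eq, ftc]
  simp only [ofReal_one, one_pow, mul_one]
  ring

lemma norm_cexp_neg_mul_sq_div_le (hb : 0 ≤ b.re) {x : ℝ} (hx : 0 < x) :
    ‖cexp (-b * x ^ 2) / (2 * b * x ^ 2)‖ ≤ (2 * ‖b‖)⁻¹ * x ^ (-2 : ℝ) := by
  rw [norm_div, Real.rpow_neg hx.le, Real.rpow_two, ← mul_inv]
  have : ‖(2 * b * (x : ℂ) ^ 2)‖ = 2 * ‖b‖ * x ^ 2 := by simp [abs_of_pos hx]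
  rw [this]
  exact (div_le_div_of_nonneg_right (norm_cexp_neg_mul_sq_le_one hb x) (by positivity)).trans_eq
    (one_div _)

lemma integrableOn_Ioi_one_cexp_neg_mul_sq_div (hb : 0 ≤ b.re) :
    IntegrableOn (fun x : ℝ => cexp (-b * x ^ 2) / (2 * b * x ^ 2)) (Ioi 1) := by
  refine Integrable.mono'
    ((integrableOn_Ioi_rpow_of_lt (by norm_num : (-2 : ℝ) < -1) one_pos).const_mul (2 * ‖b‖)⁻¹)
    (by fun_prop : Measurable _).aestronglyMeasurable ?_
  filter_upwards [ae_restrict_mem measurableSet_Ioi] with x (hx : 1 < x)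
  exact norm_cexp_neg_mul_sq_div_le hb (one_pos.trans hx)

lemma tendsto_cexp_neg_mul_sq_div_atTop (hb : 0 ≤ b.re) :
    Tendsto (fun R : ℝ => cexp (-b * R ^ 2) / (2 * b * R)) atTop (𝓝 0) := by
  have hlim : Tendsto (fun R : ℝ => (2 * ‖b‖)⁻¹ * R⁻¹) atTop (𝓝 0) := by
    simpa using tendsto_inv_atTop_zero.const_mul (2 * ‖b‖)⁻¹
  refine squeeze_zero_norm' ?_ hlim
  filter_upwards [eventually_gt_atTop 0] with R hR
  have : ‖(2 * b * (R : ℂ))‖ = 2 * ‖b‖ * R := by simp [abs_of_pos hR]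
  rw [norm_div, this, ← mul_inv]
  exact (div_le_div_of_nonneg_right (norm_cexp_neg_mul_sq_le_one hb R) (by positivity)).trans_eq
    (one_div _)

/-- `∫₀^∞ exp (-b x²) dx` after one integration by parts on `[1, ∞)`: the remaining integral
converges absolutely on the whole closed half-plane `0 ≤ re b`, imaginary axis included. -/
noncomputable def improperGaussianIntegral (b : ℂ) : ℂ :=
  (∫ x in (0 : ℝ)..1, cexp (-b * x ^ 2)) + cexp (-b) / (2 * b)
    - ∫ x in Ioi (1 : ℝ), cexp (-b * x ^ 2) / (2 * b * x ^ 2)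

lemma tendsto_integral_cexp_neg_mul_sq_improperGaussianIntegral (hb : 0 ≤ b.re) (hb₀ : b ≠ 0) :
    Tendsto (fun R : ℝ => ∫ x in (0 : ℝ)..R, cexp (-b * x ^ 2)) atTop
      (𝓝 (improperGaussianIntegral b)) := by
  have hint : ∀ u v : ℝ, IntervalIntegrable (fun x : ℝ => cexp (-b * x ^ 2)) volume u v :=
    (by fun_prop : Continuous fun x : ℝ => cexp (-b * x ^ 2)).intervalIntegrable
  have hsplit : ∀ᶠ R : ℝ in atTop, ∫ x in (0 : ℝ)..R, cexp (-b * x ^ 2) =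
      (∫ x in (0 : ℝ)..1, cexp (-b * x ^ 2)) + cexp (-b) / (2 * b)
        - cexp (-b * R ^ 2) / (2 * b * R)
        - ∫ x in (1 : ℝ)..R, cexp (-b * x ^ 2) / (2 * b * x ^ 2) := by
    filter_upwards [eventually_gt_atTop 0] with R hR
    rw [← intervalIntegral.integral_add_adjacent_intervals (hint 0 1) (hint 1 R),
      integral_one_cexp_neg_mul_sq hb₀ hR]
    ring
  have hlim := ((tendsto_const_nhds (x := (∫ x in (0 : ℝ)..1, cexp (-b * x ^ 2))
    + cexp (-b) / (2 * b))).sub (tendsto_cexp_neg_mul_sq_div_atTop hb)).sub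
    (intervalIntegral_tendsto_integral_Ioi 1 (integrableOn_Ioi_one_cexp_neg_mul_sq_div hb)
      tendsto_id)
  rw [sub_zero] at hlim
  exact (tendsto_congr' hsplit).2 hlim

lemma continuousWithinAt_improperGaussianIntegral {b₀ : ℂ} (hb₀ : b₀ ≠ 0) :
    ContinuousWithinAt improperGaussianIntegral {b | 0 ≤ b.re} b₀ := by
  have hhead : Continuous fun b : ℂ => ∫ x in (0 : ℝ)..1, cexp (-b * x ^ 2) :=
    intervalIntegral.continuous_parametric_intervalIntegral_of_continuous' (by fun_prop) 0 1
  have hboundary : ContinuousAt (fun b : ℂ => cexp (-b) / (2 * b)) b₀ :=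
    (by fun_prop : Continuous fun b : ℂ => cexp (-b)).continuousAt.div (by fun_prop)
      (by simpa using hb₀)
  have htail : ContinuousWithinAt
      (fun b : ℂ => ∫ x in Ioi (1 : ℝ), cexp (-b * x ^ 2) / (2 * b * x ^ 2))
      {b | 0 ≤ b.re} b₀ := by
    have hnear : ∀ᶠ b in 𝓝[{b | 0 ≤ b.re}] b₀, 0 ≤ b.re ∧ ‖b₀‖ / 2 < ‖b‖ :=
      eventually_mem_nhdsWithin.and (nhdsWithin_le_nhds
        ((continuous_norm.tendsto b₀).eventually_const_lt (half_lt_self (norm_pos_iff.2 hb₀))))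
    refine continuousWithinAt_of_dominated (bound := fun x => ‖b₀‖⁻¹ * x ^ (-2 : ℝ))
      (Eventually.of_forall fun b => (by fun_prop : Measurable _).aestronglyMeasurable) ?_
      ((integrableOn_Ioi_rpow_of_lt (by norm_num : (-2 : ℝ) < -1) one_pos).const_mul _) ?_
    · filter_upwards [hnear] with b ⟨hb, hbb₀⟩
      filter_upwards [ae_restrict_mem measurableSet_Ioi] with x (hx : 1 < x)
      refine (norm_cexp_neg_mul_sq_div_le hb (one_pos.trans hx)).trans ?_
      gcongr
      linarith
    · filter_upwards [ae_restrict_mem measurableSet_Ioi] with x (hx : 1 < x)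
      have hx₀ : (x : ℂ) ≠ 0 := ofReal_ne_zero.2 (one_pos.trans hx).ne'
      exact ((by fun_prop : Continuous fun b : ℂ => cexp (-b * x ^ 2)).continuousAt.div
        (by fun_prop) (by simp [hb₀, hx₀])).continuousWithinAt
  exact ((hhead.continuousWithinAt.add hboundary.continuousWithinAt).sub htail)

lemma improperGaussianIntegral_of_re_pos (hb : 0 < b.re) :
    improperGaussianIntegral b = (π / b) ^ (1 / 2 : ℂ) / 2 := by
  refine tendsto_nhds_unique
    (tendsto_integral_cexp_neg_mul_sq_improperGaussianIntegral hb.le (by rintro rfl; simp at hb)) ?_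
  rw [← integral_gaussian_complex_Ioi hb]
  exact intervalIntegral_tendsto_integral_Ioi 0 (integrable_cexp_neg_mul_sq hb).integrableOn
    tendsto_id

lemma ofReal_div_mem_slitPlane {r : ℝ} (hr : 0 < r) (hb : 0 ≤ b.re) (hb₀ : b ≠ 0) :
    (r : ℂ) / b ∈ slitPlane := by
  have hre : 0 ≤ ((r : ℂ) / b).re := by
    simp only [div_re, ofReal_re, ofReal_im, zero_mul, zero_div, add_zero]
    exact div_nonneg (mul_nonneg hr.le hb) (normSq_nonneg b)
  have hne : (r : ℂ) / b ≠ 0 := div_ne_zero (ofReal_ne_zero.2 hr.ne') hb₀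
  rcases hre.lt_or_eq with hpos | hzero
  · exact Or.inl hpos
  · exact Or.inr fun him => hne (Complex.ext hzero.symm him)

theorem tendsto_integral_cexp_neg_mul_sq_of_re_nonneg (hb : 0 ≤ b.re) (hb₀ : b ≠ 0) :
    Tendsto (fun R : ℝ => ∫ x in (0 : ℝ)..R, cexp (-b * x ^ 2)) atTop
      (𝓝 ((π / b) ^ (1 / 2 : ℂ) / 2)) := by
  suffices improperGaussianIntegral b = (π / b) ^ (1 / 2 : ℂ) / 2 from
    this ▸ tendsto_integral_cexp_neg_mul_sq_improperGaussianIntegral hb hb₀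
  have hpath : Tendsto (fun ε : ℝ => b + ε) (𝓝[>] 0) (𝓝[{b | 0 ≤ b.re}] b) := by
    refine tendsto_nhdsWithin_iff.2 ⟨?_, ?_⟩
    · simpa using ((by fun_prop : Continuous fun ε : ℝ => b + ε).tendsto 0).mono_left
        nhdsWithin_le_nhds
    · filter_upwards [self_mem_nhdsWithin] with ε (hε : 0 < ε)
      simp only [add_re, ofReal_re]; linarith
  have hgauss : Tendsto (fun ε : ℝ => (π / (b + ε)) ^ (1 / 2 : ℂ) / 2) (𝓝[>] 0)
      (𝓝 ((π / b) ^ (1 / 2 : ℂ) / 2)) := by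
    have hcont : ContinuousAt (fun z : ℂ => (π / z) ^ (1 / 2 : ℂ) / 2) b :=
      ((continuousAt_cpow_const (ofReal_div_mem_slitPlane pi_pos hb hb₀)).comp
        (continuousAt_const.div continuousAt_id hb₀)).div_const 2
    exact hcont.tendsto.comp (tendsto_nhds_of_tendsto_nhdsWithin hpath)
  refine tendsto_nhds_unique ((continuousWithinAt_improperGaussianIntegral hb₀).tendsto.comp hpath)
    (hgauss.congr' ?_)
  filter_upwards [self_mem_nhdsWithin] with ε (hε : 0 < ε)
  exact (improperGaussianIntegral_of_re_pos (by rw [add_re, ofReal_re]; linarith)).symm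

end ImproperGaussian

theorem tendsto_integral_cexp_mul_sq_mul_I {a : ℝ} (ha : 0 < a) :
    Tendsto (fun R : ℝ => ∫ x in (0 : ℝ)..R, cexp (a * x ^ 2 * I)) atTop
      (𝓝 (√(π / (2 * a)) * (1 + I) / 2)) := by
  have hlim := tendsto_integral_cexp_neg_mul_sq_of_re_nonneg (b := -(a * I)) (by simp)
    (by simp [ha.ne'])
  have hquot : (π / -(a * I) : ℂ) = (π / a : ℝ) * I := by
    rw [div_neg, ← div_div, div_I, neg_neg, ofReal_div]
  have hsqrt : (π / -(a * I) : ℂ) ^ (1 / 2 : ℂ) = √(π / (2 * a)) * (1 + I) := by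
    have hnorm : ‖((π / a : ℝ) : ℂ) * I‖ = π / a := by
      rw [norm_mul, norm_I, mul_one, norm_real, Real.norm_of_nonneg (by positivity)]
    have hhalf : π / a / 2 = π / (2 * a) := by ring
    rw [hquot, one_div]
    apply Complex.ext
    · rw [cpow_inv_two_re, hnorm, re_ofReal_mul, I_re, mul_zero, add_zero, hhalf]
      simp
    · rw [cpow_inv_two_im_eq_sqrt (by simp; positivity), hnorm, re_ofReal_mul, I_re, mul_zero,
        sub_zero, hhalf]
      simp
  rw [hsqrt] at hlim
  simpa [mul_right_comm _ I] using hlim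

section EvenShift

variable {E : Type*} [NormedAddCommGroup E] [NormedSpace ℝ E] {f : ℝ → E} {L : E}

lemma tendsto_integral_comp_add_right (hf : Continuous f)
    (h : Tendsto (fun R => ∫ x in (0 : ℝ)..R, f x) atTop (𝓝 L)) (d : ℝ) :
    Tendsto (fun R => ∫ x in (0 : ℝ)..R, f (x + d)) atTop (𝓝 (L - ∫ x in (0 : ℝ)..d, f x)) := by
  have hshift : ∀ R, ∫ x in (0 : ℝ)..R, f (x + d) =
      (∫ x in (0 : ℝ)..R + d, f x) - ∫ x in (0 : ℝ)..d, f x := fun R => by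
    rw [intervalIntegral.integral_comp_add_right, zero_add,
      intervalIntegral.integral_interval_sub_left (hf.intervalIntegrable _ _)
        (hf.intervalIntegrable _ _)]
  simp_rw [hshift]
  exact (h.comp (tendsto_atTop_add_const_right _ d tendsto_id)).sub_const _

lemma integral_zero_neg_of_even (heven : ∀ x, f (-x) = f x) (d : ℝ) :
    ∫ x in (0 : ℝ)..-d, f x = -∫ x in (0 : ℝ)..d, f x := by
  rw [intervalIntegral.integral_symm, neg_inj]
  simpa [heven] using (intervalIntegral.integral_comp_neg (a := 0) (b := d) f).symm

lemma tendsto_integral_comp_add_add_comp_sub_of_even (hf : Continuous f)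
    (heven : ∀ x, f (-x) = f x) (h : Tendsto (fun R => ∫ x in (0 : ℝ)..R, f x) atTop (𝓝 L))
    (d : ℝ) :
    Tendsto (fun R => ∫ x in (0 : ℝ)..R, (f (x + d) + f (x - d))) atTop (𝓝 (L + L)) := by
  have hsum := (tendsto_integral_comp_add_right hf h d).add
    (tendsto_integral_comp_add_right hf h (-d))
  rw [integral_zero_neg_of_even heven, sub_neg_eq_add, sub_add_add_cancel] at hsum
  refine hsum.congr fun R => ?_
  simp_rw [← sub_eq_add_neg]
  exact (intervalIntegral.integral_add ((hf.comp (continuous_add_const d)).intervalIntegrable _ _)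
    ((hf.comp (continuous_sub_right d)).intervalIntegrable _ _)).symm

end EvenShift

lemma cos_mul_sq_mul_cos_eq_re {a : ℝ} (ha : a ≠ 0) (s x : ℝ) :
    Real.cos (a * x ^ 2) * Real.cos (s * x) =
      (cexp ((-(s ^ 2 / (4 * a)) : ℝ) * I) / 2 *
        (cexp (a * ((x + s / (2 * a) : ℝ) : ℂ) ^ 2 * I)
          + cexp (a * ((x - s / (2 * a) : ℝ) : ℂ) ^ 2 * I))).re := by
  have haC : (a : ℂ) ≠ 0 := ofReal_ne_zero.2 ha
  have hplus : cexp ((-(s ^ 2 / (4 * a)) : ℝ) * I) * cexp (a * ((x + s / (2 * a) : ℝ) : ℂ) ^ 2 * I)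
      = cexp ((a * x ^ 2 + s * x : ℝ) * I) := by
    rw [← Complex.exp_add]
    congr 1
    push_cast
    field_simp
    ring
  have hminus : cexp ((-(s ^ 2 / (4 * a)) : ℝ) * I) * cexp (a * ((x - s / (2 * a) : ℝ) : ℂ) ^ 2 * I)
      = cexp ((a * x ^ 2 - s * x : ℝ) * I) := by
    rw [← Complex.exp_add]
    congr 1
    push_cast
    field_simp
    ring
  rw [div_mul_eq_mul_div, mul_add, hplus, hminus, div_ofNat_re, add_re, exp_ofReal_mul_I_re,
    exp_ofReal_mul_I_re, Real.cos_add, Real.cos_sub]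
  ring

lemma integral_cos_mul_sq_mul_cos_eq_re {a : ℝ} (ha : a ≠ 0) (s R : ℝ) :
    ∫ x in (0 : ℝ)..R, Real.cos (a * x ^ 2) * Real.cos (s * x) =
      (cexp ((-(s ^ 2 / (4 * a)) : ℝ) * I) / 2 *
        ∫ x in (0 : ℝ)..R, (cexp (a * ((x + s / (2 * a) : ℝ) : ℂ) ^ 2 * I)
          + cexp (a * ((x - s / (2 * a) : ℝ) : ℂ) ^ 2 * I))).re := by
  rw [← intervalIntegral.integral_const_mul, ← reCLM_apply,
    ← reCLM.intervalIntegral_comp_comm (Continuous.intervalIntegrable (by fun_prop) _ _)]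
  simp_rw [reCLM_apply, cos_mul_sq_mul_cos_eq_re ha s]

theorem stmt3 (a : ℝ) (ha : 0 < a) (s : ℝ) :
    Tendsto (fun R : ℝ => ∫ x in (0:ℝ)..R, Real.cos (a * x ^ 2) * Real.cos (s * x)) atTop
      (nhds ((1 / 2) * Real.sqrt (π / (2 * a)) *
        (Real.cos (s ^ 2 / (4 * a)) + Real.sin (s ^ 2 / (4 * a))))) := by
  have hshifted := tendsto_integral_comp_add_add_comp_sub_of_even
    (f := fun u : ℝ => cexp (a * u ^ 2 * I)) (by fun_prop) (fun u => by simp)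
    (tendsto_integral_cexp_mul_sq_mul_I ha) (s / (2 * a))
  have hre := ((continuous_re.comp (continuous_const_mul
    (cexp ((-(s ^ 2 / (4 * a)) : ℝ) * I) / 2))).tendsto _).comp hshifted
  have hvalue : (cexp ((-(s ^ 2 / (4 * a)) : ℝ) * I) / 2 *
      (√(π / (2 * a)) * (1 + I) / 2 + √(π / (2 * a)) * (1 + I) / 2)).re =
      1 / 2 * √(π / (2 * a)) * (Real.cos (s ^ 2 / (4 * a)) + Real.sin (s ^ 2 / (4 * a))) := by
    rw [exp_mul_I, ← ofReal_cos, ← ofReal_sin, Real.cos_neg, Real.sin_neg]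
    simp only [mul_re, add_re, div_ofNat_re, ofReal_re, ofReal_im, I_re, I_im, one_re, one_im,
      mul_im, add_im, div_ofNat_im]
    ring
  simp_rw [integral_cos_mul_sq_mul_cos_eq_re ha.ne' s, ← hvalue]
  exact hre
end

section
/- Suppose f : [a, b] → ℂ has a convergent improper Riemann integral on the finite interval [a, b]. Then for every s ∈ ℝ the integral F̂(s) = ∫_a^b e^{isx} f(x) dx exists, and F̂(s) = o(s) as |s| → ∞. -/
/-!
Integrating by parts against the primitive `F` of `f` shows that
`G x = e^{isx} F x - i s ∫_a^x e^{ist} F t dt` is a primitive of `e^{isx} f x` which is continuous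
on `[a, b]`, so the improper integral exists and equals `G b - G a`. The first two terms of
`G b - G a` are bounded in `s`, while `∫_a^b e^{ist} F t dt → 0` by the Riemann–Lebesgue lemma,
so the remaining term is `o(s)`.
-/

open Filter Topology Asymptotics MeasureTheory Set Complex

section ImproperIntegral

variable {E : Type*} [NormedAddCommGroup E] {a b : ℝ}

lemma eventually_mem_Ioo_prod (hab : a < b) :
    ∀ᶠ p : ℝ × ℝ in 𝓝[>] a ×ˢ 𝓝[<] b, p.1 ∈ Ioo a b ∧ p.2 ∈ Ioo a b :=
  prod_mem_prod (Ioo_mem_nhdsGT hab) (Ioo_mem_nhdsLT hab)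

lemma ContinuousOn.tendsto_sub_nhdsGT_prod_nhdsLT {G : ℝ → E} (hab : a < b)
    (hG : ContinuousOn G (Icc a b)) :
    Tendsto (fun p : ℝ × ℝ => G p.2 - G p.1) (𝓝[>] a ×ˢ 𝓝[<] b) (𝓝 (G b - G a)) := by
  have ha : Tendsto G (𝓝[>] a) (𝓝 (G a)) := by
    rw [← nhdsWithin_Ioo_eq_nhdsGT hab]
    exact (hG a (left_mem_Icc.2 hab.le)).mono Ioo_subset_Icc_self
  have hb : Tendsto G (𝓝[<] b) (𝓝 (G b)) := by
    rw [← nhdsWithin_Ioo_eq_nhdsLT hab]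
    exact (hG b (right_mem_Icc.2 hab.le)).mono Ioo_subset_Icc_self
  exact (hb.comp tendsto_snd).sub (ha.comp tendsto_fst)

variable [NormedSpace ℝ E]

lemma tendsto_integral_of_hasDerivAt_Ioo [CompleteSpace E] {G g : ℝ → E} (hab : a < b)
    (hG : ContinuousOn G (Icc a b)) (hderiv : ∀ x ∈ Ioo a b, HasDerivAt G (g x) x)
    (hint : ∀ᶠ p : ℝ × ℝ in 𝓝[>] a ×ˢ 𝓝[<] b, IntervalIntegrable g volume p.1 p.2) :
    Tendsto (fun p : ℝ × ℝ => ∫ x in p.1..p.2, g x) (𝓝[>] a ×ˢ 𝓝[<] b) (𝓝 (G b - G a)) := by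
  refine (hG.tendsto_sub_nhdsGT_prod_nhdsLT hab).congr' ?_
  filter_upwards [eventually_mem_Ioo_prod hab, hint] with p ⟨hp₁, hp₂⟩ hp
  exact (intervalIntegral.integral_eq_sub_of_hasDerivAt
    (fun x hx => hderiv x (ordConnected_Ioo.uIcc_subset hp₁ hp₂ hx)) hp).symm

/-- Integrability on `[p.1, p.2]` is monotone in the interval, so it fails eventually as soon as
it fails frequently. -/
lemma tendsto_integral_zero_of_not_eventually_intervalIntegrable {g : ℝ → E} (hab : a < b)
    (hg : ¬∀ᶠ p : ℝ × ℝ in 𝓝[>] a ×ˢ 𝓝[<] b, IntervalIntegrable g volume p.1 p.2) :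
    Tendsto (fun p : ℝ × ℝ => ∫ x in p.1..p.2, g x) (𝓝[>] a ×ˢ 𝓝[<] b) (𝓝 0) := by
  obtain ⟨q, hq, ⟨hq₁, hq₂⟩⟩ :=
    ((not_eventually.1 hg).and_eventually (eventually_mem_Ioo_prod hab)).exists
  have hleft : ∀ᶠ x in 𝓝[>] a, x < q.1 ⊓ q.2 :=
    eventually_nhdsWithin_of_eventually_nhds (eventually_lt_nhds (lt_inf_iff.2 ⟨hq₁.1, hq₂.1⟩))
  have hright : ∀ᶠ x in 𝓝[<] b, q.1 ⊔ q.2 < x :=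
    eventually_nhdsWithin_of_eventually_nhds (eventually_gt_nhds (sup_lt_iff.2 ⟨hq₁.2, hq₂.2⟩))
  refine tendsto_const_nhds.congr' ?_
  filter_upwards [hleft.prod_mk hright] with p ⟨hp₁, hp₂⟩
  exact (intervalIntegral.integral_undef fun hp => hq
    (hp.mono_set ((Icc_subset_Icc hp₁.le hp₂.le).trans Icc_subset_uIcc))).symm

lemma ContinuousOn.hasDerivAt_integral_of_mem_Ioo [CompleteSpace E] {h : ℝ → E}
    (hh : ContinuousOn h (Icc a b)) {x : ℝ} (hx : x ∈ Ioo a b) :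
    HasDerivAt (fun y => ∫ t in a..y, h t) (h x) x := by
  have hIoo : ContinuousOn h (Ioo a b) := hh.mono Ioo_subset_Icc_self
  have hint : IntervalIntegrable h volume a x :=
    (hh.mono (Icc_subset_Icc_right hx.2.le)).intervalIntegrable_of_Icc hx.1.le
  exact intervalIntegral.integral_hasDerivAt_right hint
    (hIoo.stronglyMeasurableAtFilter isOpen_Ioo x hx) (hIoo.continuousAt (isOpen_Ioo.mem_nhds hx))

end ImproperIntegral

section FourierTransform

lemma continuous_cexp_ofReal_mul_I (s : ℝ) :
    Continuous fun x : ℝ => Complex.exp (((s * x : ℝ) : ℂ) * I) := by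
  fun_prop

lemma hasDerivAt_cexp_ofReal_mul_I (s x : ℝ) :
    HasDerivAt (fun x : ℝ => Complex.exp (((s * x : ℝ) : ℂ) * I))
      ((s : ℂ) * I * Complex.exp (((s * x : ℝ) : ℂ) * I)) x := by
  simpa [mul_comm] using (((hasDerivAt_id x).const_mul s).ofReal_comp.mul_const I).cexp

lemma intervalIntegrable_cexp_ofReal_mul_I_mul_iff (s u v : ℝ) (f : ℝ → ℂ) :
    IntervalIntegrable (fun x => Complex.exp (((s * x : ℝ) : ℂ) * I) * f x) volume u v ↔
      IntervalIntegrable f volume u v := by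
  refine ⟨fun h => ?_, fun h => h.continuousOn_mul (continuous_cexp_ofReal_mul_I s).continuousOn⟩
  have hcancel : (fun x : ℝ => Complex.exp (((-s * x : ℝ) : ℂ) * I) *
      (Complex.exp (((s * x : ℝ) : ℂ) * I) * f x)) = f := by
    funext x
    rw [← mul_assoc, ← Complex.exp_add, ← add_mul, ← ofReal_add, neg_mul, neg_add_cancel,
      ofReal_zero, zero_mul, Complex.exp_zero, one_mul]
  simpa only [hcancel] using h.continuousOn_mul (continuous_cexp_ofReal_mul_I (-s)).continuousOn

/-- Riemann–Lebesgue lemma; for non-integrable `g` the integrals are all `0`. -/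
lemma tendsto_integral_cexp_ofReal_mul_I_mul_cocompact (g : ℝ → ℂ) :
    Tendsto (fun s : ℝ => ∫ x, Complex.exp (((s * x : ℝ) : ℂ) * I) * g x) (cocompact ℝ) (𝓝 0) := by
  have hscale : Tendsto (fun s : ℝ => s * (-(2 * Real.pi)⁻¹)) (cocompact ℝ) (cocompact ℝ) :=
    (Homeomorph.mulRight₀ _ (neg_ne_zero.2 (inv_ne_zero (by positivity)))).map_cocompact.le
  refine ((Real.tendsto_integral_exp_smul_cocompact g).comp hscale).congr fun s => ?_
  simp only [Function.comp, Circle.smul_def, Real.fourierChar_apply]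
  congr 2 with x
  have hπ : (Real.pi : ℂ) ≠ 0 := ofReal_ne_zero.2 Real.pi_ne_zero
  rw [smul_eq_mul]
  push_cast
  field_simp

lemma tendsto_intervalIntegral_cexp_ofReal_mul_I_mul_cocompact (g : ℝ → ℂ) {a b : ℝ}
    (hab : a ≤ b) :
    Tendsto (fun s : ℝ => ∫ x in a..b, Complex.exp (((s * x : ℝ) : ℂ) * I) * g x)
      (cocompact ℝ) (𝓝 0) := by
  refine (tendsto_integral_cexp_ofReal_mul_I_mul_cocompact ((Ioc a b).indicator g)).congr
    fun s => ?_
  rw [intervalIntegral.integral_of_le hab, ← integral_indicator measurableSet_Ioc]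
  simp only [indicator_mul_right]

/-- With `F' = f`, integration by parts turns `∫_a^x e^{ist} f t dt` into this expression
(up to a constant). -/
noncomputable def expMulPrimitive (F : ℝ → ℂ) (a s x : ℝ) : ℂ :=
  Complex.exp (((s * x : ℝ) : ℂ) * I) * F x -
    s * I * ∫ t in a..x, Complex.exp (((s * t : ℝ) : ℂ) * I) * F t

variable {a b : ℝ} {f F : ℝ → ℂ}

lemma continuousOn_expMulPrimitive (hab : a ≤ b) (hF : ContinuousOn F (Icc a b)) (s : ℝ) :
    ContinuousOn (expMulPrimitive F a s) (Icc a b) := by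
  have hprim := intervalIntegral.continuousOn_primitive_interval (μ := volume)
    (f := fun t => Complex.exp (((s * t : ℝ) : ℂ) * I) * F t) (a := a) (b := b)
  rw [uIcc_of_le hab] at hprim
  have hexpF := (continuous_cexp_ofReal_mul_I s).continuousOn.mul hF
  exact hexpF.sub (continuousOn_const.mul (hprim hexpF.integrableOn_Icc))

lemma hasDerivAt_expMulPrimitive (hFcont : ContinuousOn F (Icc a b))
    (hF : ∀ x ∈ Ioo a b, HasDerivAt F (f x) x) (s : ℝ) {x : ℝ} (hx : x ∈ Ioo a b) :
    HasDerivAt (expMulPrimitive F a s) (Complex.exp (((s * x : ℝ) : ℂ) * I) * f x) x := by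
  have hprim :=
    ((continuous_cexp_ofReal_mul_I s).continuousOn.mul hFcont).hasDerivAt_integral_of_mem_Ioo hx
  refine (((hasDerivAt_cexp_ofReal_mul_I s x).mul (hF x hx)).sub
    (hprim.const_mul ((s : ℂ) * I))).congr_deriv ?_
  simp only [Pi.mul_apply]
  ring

end FourierTransform

lemma isLittleO_ofReal_cocompact_of_norm_le {g : ℝ → ℂ} {C : ℝ} (hg : ∀ s, ‖g s‖ ≤ C) :
    g =o[cocompact ℝ] (fun s : ℝ => (s : ℂ)) := by
  have hbdd : g =O[cocompact ℝ] (fun _ => (1 : ℂ)) :=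
    isBigO_of_le' (c := C) _ fun s => by simpa using hg s
  refine hbdd.trans_isLittleO (isLittleO_const_left.2 (Or.inr ?_))
  exact tendsto_norm_cocompact_atTop.congr fun s => (norm_real s).symm

lemma isLittleO_mul_of_tendsto_zero {α 𝕜 : Type*} [NormedField 𝕜] {l : Filter α} {g k : α → 𝕜}
    (hk : Tendsto k l (𝓝 0)) : (fun x => g x * k x) =o[l] g := by
  simpa using (isBigO_refl g l).mul_isLittleO ((isLittleO_one_iff 𝕜).2 hk)

theorem stmt6_general (a b : ℝ) (hab : a < b) (f F : ℝ → ℂ)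
    (hFcont : ContinuousOn F (Set.Icc a b))
    (hF : ∀ x ∈ Set.Ioo a b, HasDerivAt F (f x) x) :
    ∃ Fhat : ℝ → ℂ,
      (∀ s : ℝ, Tendsto
        (fun p : ℝ × ℝ => ∫ x in p.1..p.2, Complex.exp (((s * x : ℝ) : ℂ) * Complex.I) * f x)
        ((nhdsWithin a (Set.Ioi a)) ×ˢ (nhdsWithin b (Set.Iio b))) (nhds (Fhat s))) ∧
      Fhat =o[Filter.cocompact ℝ] (fun s : ℝ => (s : ℂ)) := by
  by_cases hf : ∀ᶠ p : ℝ × ℝ in 𝓝[>] a ×ˢ 𝓝[<] b, IntervalIntegrable f volume p.1 p.2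
  · refine ⟨fun s => expMulPrimitive F a s b - expMulPrimitive F a s a, fun s =>
      tendsto_integral_of_hasDerivAt_Ioo hab (continuousOn_expMulPrimitive hab.le hFcont s)
        (fun _ => hasDerivAt_expMulPrimitive hFcont hF s)
        (hf.mono fun p => (intervalIntegrable_cexp_ofReal_mul_I_mul_iff s _ _ f).2), ?_⟩
    have hbdd (c : ℝ) (s : ℝ) : ‖Complex.exp (((s * c : ℝ) : ℂ) * I) * F c‖ ≤ ‖F c‖ := by
      rw [norm_mul, norm_exp_ofReal_mul_I, one_mul]
    have hRL := (tendsto_intervalIntegral_cexp_ofReal_mul_I_mul_cocompact F hab.le).const_mul I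
    rw [mul_zero] at hRL
    refine (((isLittleO_ofReal_cocompact_of_norm_le (hbdd b)).sub
      (isLittleO_ofReal_cocompact_of_norm_le (hbdd a))).sub
      (isLittleO_mul_of_tendsto_zero hRL)).congr_left fun s => ?_
    simp only [expMulPrimitive, intervalIntegral.integral_same]
    ring
  -- otherwise the integrals are eventually the junk value `0`
  · refine ⟨0, fun s => tendsto_integral_zero_of_not_eventually_intervalIntegrable hab
      fun h => hf (h.mono fun p => (intervalIntegrable_cexp_ofReal_mul_I_mul_iff s _ _ f).1),
      isLittleO_zero _ _⟩

theorem stmt6 (a b : ℝ) (hab : a < b) (f F : ℝ → ℂ)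
    (hFcont : ContinuousOn F (Set.Icc a b)) (hFa : F a = 0)
    (hF : ∀ x ∈ Set.Ioo a b, HasDerivAt F (f x) x) :
    ∃ Fhat : ℝ → ℂ,
      (∀ s : ℝ, Tendsto
        (fun p : ℝ × ℝ => ∫ x in p.1..p.2, Complex.exp (((s * x : ℝ) : ℂ) * Complex.I) * f x)
        ((nhdsWithin a (Set.Ioi a)) ×ˢ (nhdsWithin b (Set.Iio b))) (nhds (Fhat s))) ∧
      Fhat =o[Filter.cocompact ℝ] (fun s : ℝ => (s : ℂ)) :=
  stmt6_general a b hab f F hFcont hF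
end

section
/- For 0 < r ≤ 1/2, real n, real s with |s − n| ≥ 1, and b > 0, the integral ∫_{-b}^{b} e^{i(s−n)x} sin(r x)/x dx is bounded in absolute value by (4/b)·(1/(|s−n|+r) + 1/(|s−n|−r)) + π (in fact the sine part equals a difference of two sine-integral tails each bounded using |∫_x^∞ e^{iat}/t dt| ≤ 2/(a x)). -/
/-! The imaginary part of the integrand is odd, so the integral is the real number
`∫_{-b}^{b} cos(a x) sin(r x) / x dx` with `a = |s - n|`. Writing
`2 cos(a x) sin(r x) = sin((a + r) x) - sin((a - r) x)` and using evenness, this is the increment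
`∫_{(a-r)b}^{(a+r)b} sin t / t dt` of the sine integral. On that range
`|sin t / t| ≤ 1 / ((a - r) b)`, so the increment is at most
`2 r / (a - r) ≤ 2 < π` in absolute value. -/

open Filter Real Complex MeasureTheory

lemma intervalIntegrable_sin_mul_div (c u v : ℝ) :
    IntervalIntegrable (fun x => Real.sin (c * x) / x) volume u v := by
  refine (intervalIntegrable_const (c := |c|)).mono_fun
    (Measurable.aestronglyMeasurable (by fun_prop)) (Eventually.of_forall fun x => ?_)
  rcases eq_or_ne x 0 with rfl | hx
  · simp
  · simp only [Real.norm_eq_abs, abs_abs, abs_div]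
    rw [div_le_iff₀ (abs_pos.2 hx), ← abs_mul]
    exact Real.abs_sin_le_abs

namespace intervalIntegral

variable {E : Type*} [NormedAddCommGroup E] [NormedSpace ℝ E]

theorem integral_symm_eq_zero_of_odd {f : ℝ → E} (hf : ∀ x, f (-x) = -f x) (b : ℝ) :
    ∫ x in -b..b, f x = 0 := by
  have h := integral_comp_neg (a := -b) (b := b) f
  simp only [hf, integral_neg, neg_neg] at h
  have h2 : (2 : ℝ) • ∫ x in -b..b, f x = 0 := by
    rw [two_smul]
    nth_rw 1 [← h]
    exact neg_add_cancel _
  exact (smul_eq_zero.mp h2).resolve_left two_ne_zero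

theorem integral_symm_eq_two_nsmul_of_even {f : ℝ → E} (hf : ∀ x, f (-x) = f x) {b : ℝ}
    (hint : IntervalIntegrable f volume 0 b) :
    ∫ x in -b..b, f x = 2 • ∫ x in 0..b, f x := by
  have hint' : IntervalIntegrable f volume (-b) 0 := by
    simpa [hf] using ((IntervalIntegrable.iff_comp_neg (f := f)).1 hint).symm
  have hleft : ∫ x in -b..0, f x = ∫ x in 0..b, f x := by
    simpa [hf] using integral_comp_neg (a := -b) (b := 0) f
  rw [← integral_add_adjacent_intervals hint' hint, hleft, two_nsmul]

end intervalIntegral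

lemma IntervalIntegrable.ofReal {f : ℝ → ℝ} {a b : ℝ}
    (hf : IntervalIntegrable f volume a b) :
    IntervalIntegrable (fun x => (f x : ℂ)) volume a b :=
  ⟨hf.1.ofReal, hf.2.ofReal⟩

lemma integral_sin_mul_div_eq (c b : ℝ) :
    ∫ x in 0..b, Real.sin (c * x) / x = ∫ t in 0..c * b, Real.sin t / t := by
  rcases eq_or_ne c 0 with rfl | hc
  · simp
  have h : ∀ x, Real.sin (c * x) / x = c * (Real.sin (c * x) / (c * x)) := by
    intro x
    rcases eq_or_ne x 0 with rfl | hx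
    · simp
    · field_simp
  simp_rw [h]
  rw [intervalIntegral.integral_const_mul,
    intervalIntegral.integral_comp_mul_left (fun t => Real.sin t / t) hc, mul_zero, smul_eq_mul,
    mul_inv_cancel_left₀ hc]

lemma integral_cos_mul_mul_sin_mul_div (a r b : ℝ) :
    ∫ x in -b..b, Real.cos (a * x) * (Real.sin (r * x) / x) =
      ∫ t in (a - r) * b..(a + r) * b, Real.sin t / t := by
  have hsinc (u v : ℝ) : IntervalIntegrable (fun t => Real.sin t / t) volume u v := by
    simpa using intervalIntegrable_sin_mul_div 1 u v
  have heven (x : ℝ) :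
      Real.cos (a * -x) * (Real.sin (r * -x) / -x) = Real.cos (a * x) * (Real.sin (r * x) / x) := by
    simp [neg_div_neg_eq]
  have hint : IntervalIntegrable (fun x => Real.cos (a * x) * (Real.sin (r * x) / x)) volume 0 b :=
    (intervalIntegrable_sin_mul_div r 0 b).continuousOn_mul (by fun_prop)
  have hprod (x : ℝ) : 2 * (Real.cos (a * x) * (Real.sin (r * x) / x)) =
      Real.sin ((a + r) * x) / x - Real.sin ((a - r) * x) / x := by
    rw [add_mul, sub_mul, Real.sin_add, Real.sin_sub]
    ring
  calc ∫ x in -b..b, Real.cos (a * x) * (Real.sin (r * x) / x)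
      = 2 * ∫ x in 0..b, Real.cos (a * x) * (Real.sin (r * x) / x) := by
        rw [intervalIntegral.integral_symm_eq_two_nsmul_of_even heven hint, nsmul_eq_mul,
          Nat.cast_ofNat]
    _ = ∫ x in 0..b, (Real.sin ((a + r) * x) / x - Real.sin ((a - r) * x) / x) := by
        rw [← intervalIntegral.integral_const_mul]
        simp_rw [hprod]
    _ = (∫ t in 0..(a + r) * b, Real.sin t / t) - ∫ t in 0..(a - r) * b, Real.sin t / t := by
        rw [intervalIntegral.integral_sub (intervalIntegrable_sin_mul_div _ _ _)
          (intervalIntegrable_sin_mul_div _ _ _), integral_sin_mul_div_eq, integral_sin_mul_div_eq]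
    _ = ∫ t in (a - r) * b..(a + r) * b, Real.sin t / t :=
        intervalIntegral.integral_interval_sub_left (hsinc _ _) (hsinc _ _)

lemma abs_integral_sin_div_le {u v : ℝ} (hu : 0 < u) (huv : u ≤ v) :
    |∫ t in u..v, Real.sin t / t| ≤ (v - u) / u := by
  have hbound : ∀ t ∈ Set.uIoc u v, ‖Real.sin t / t‖ ≤ u⁻¹ := by
    intro t ht
    rw [Set.uIoc_of_le huv] at ht
    rw [Real.norm_eq_abs, abs_div, abs_of_pos (hu.trans ht.1), ← one_div]
    exact div_le_div₀ zero_le_one (Real.abs_sin_le_one t) hu ht.1.le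
  calc |∫ t in u..v, Real.sin t / t| ≤ u⁻¹ * |v - u| :=
      intervalIntegral.norm_integral_le_of_norm_le_const hbound
    _ = (v - u) / u := by rw [abs_of_nonneg (sub_nonneg.2 huv), div_eq_inv_mul]

lemma integral_exp_mul_I_mul_sin_mul_div (c r b : ℝ) :
    ∫ x in -b..b,
        Complex.exp (((c * x : ℝ) : ℂ) * Complex.I) * ((Real.sin (r * x) / x : ℝ) : ℂ) =
      ((∫ x in -b..b, Real.cos (c * x) * (Real.sin (r * x) / x) : ℝ) : ℂ) := by
  have hsplit (x : ℝ) :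
      Complex.exp (((c * x : ℝ) : ℂ) * Complex.I) * ((Real.sin (r * x) / x : ℝ) : ℂ) =
      ((Real.cos (c * x) * (Real.sin (r * x) / x) : ℝ) : ℂ) +
        Complex.I * ((Real.sin (c * x) * (Real.sin (r * x) / x) : ℝ) : ℂ) := by
    rw [Complex.exp_mul_I]
    push_cast
    ring
  have hodd :
      ∫ x in -b..b, Complex.I * ((Real.sin (c * x) * (Real.sin (r * x) / x) : ℝ) : ℂ) = 0 :=
    intervalIntegral.integral_symm_eq_zero_of_odd (fun x => by simp [neg_div_neg_eq]) b
  have hint (f : ℝ → ℝ) (hf : Continuous f) :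
      IntervalIntegrable (fun x => ((f x * (Real.sin (r * x) / x) : ℝ) : ℂ)) volume (-b) b :=
    ((intervalIntegrable_sin_mul_div r _ _).continuousOn_mul hf.continuousOn).ofReal
  simp_rw [hsplit]
  rw [intervalIntegral.integral_add (hint _ (by fun_prop)) ((hint _ (by fun_prop)).const_mul _),
    hodd, add_zero, intervalIntegral.integral_ofReal]

lemma abs_integral_cos_mul_mul_sin_mul_div_le {a r b : ℝ} (hr : 0 < r) (hra : r < a)
    (hb : 0 < b) :
    |∫ x in -b..b, Real.cos (a * x) * (Real.sin (r * x) / x)| ≤ 2 * r / (a - r) := by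
  have hu : 0 < (a - r) * b := mul_pos (sub_pos.2 hra) hb
  rw [integral_cos_mul_mul_sin_mul_div]
  calc _ ≤ ((a + r) * b - (a - r) * b) / ((a - r) * b) :=
        abs_integral_sin_div_le hu (by nlinarith)
    _ = 2 * r / (a - r) := by
        field_simp
        ring

theorem stmt8 (r n s b : ℝ) (hr : 0 < r) (hr2 : r ≤ 1 / 2) (hsn : 1 ≤ |s - n|) (hb : 0 < b) :
    ‖∫ x in (-b)..b, Complex.exp ((((s - n) * x : ℝ) : ℂ) * Complex.I) * ((Real.sin (r * x) / x : ℝ) : ℂ)‖ ≤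
      (4 / b) * (1 / (|s - n| + r) + 1 / (|s - n| - r)) + π := by
  have hcos (x : ℝ) : Real.cos ((s - n) * x) = Real.cos (|s - n| * x) := by
    rcases abs_choice (s - n) with h | h
    · rw [h]
    · rw [h, neg_mul, Real.cos_neg]
  have hgap : 0 < |s - n| - r := by linarith
  have hreal : |∫ x in -b..b, Real.cos (|s - n| * x) * (Real.sin (r * x) / x)| ≤ 2 :=
    (abs_integral_cos_mul_mul_sin_mul_div_le hr (by linarith) hb).trans <| by
      rw [div_le_iff₀ hgap]
      linarith
  have hrest : 0 ≤ (4 / b) * (1 / (|s - n| + r) + 1 / (|s - n| - r)) := by positivity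
  rw [integral_exp_mul_I_mul_sin_mul_div, Complex.norm_real, Real.norm_eq_abs]
  simp_rw [hcos]
  linarith [Real.pi_gt_three]
end

section
/- Given any sequence (a_n) of positive real numbers, there exists a continuous function f : ℝ → ℂ such that the improper integral f̂(s) = ∫_{-∞}^{∞} e^{isx} f(x) dx converges for every s ∈ ℝ, and Re f̂(n) ≥ a_n for every positive integer n. -/
/-!
With `tent L x = max 0 (1 - |x| / L)`, the truncated Fourier integrals
`J(t, R) = ∫_{-R}^{R} e^{itx} tent L x dx` stop changing once `R ≥ L`, are bounded by `2L`, and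
are bounded by an absolute constant when `|t| ≥ 1` and `L ≥ 1` (integrate `e^{itx} (1 - x/L)`
explicitly). Their limits are `2 (1 - cos tL) / (t² L) ≥ 0` for `t ≠ 0` and `L` for `t = 0`.

Take `f x = ∑ₖ cₖ e^{-ikx} tent Lₖ x` with `cₖ = 2⁻ᵏ` and `Lₖ = 2ᵏ |aₖ| + 1`. The series
converges uniformly, so `f` is continuous and its truncated Fourier integral at `s` is
`∑ₖ cₖ J_{Lₖ}(s - k, R)`. Only finitely many `k` lie within `1` of `s`, so the bounds above
dominate this series uniformly in `R`, and `f̂(s) = ∑ₖ cₖ J_{Lₖ}(s - k, Lₖ)`. At `s = n` every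
term has nonnegative real part and the term `k = n` is `cₙ Lₙ ≥ aₙ`.
-/

open Filter Real Complex

noncomputable def tent (L x : ℝ) : ℝ := max 0 (1 - |x| / L)

@[fun_prop]
theorem continuous_tent (L : ℝ) : Continuous (tent L) := by
  unfold tent; fun_prop

theorem tent_nonneg (L x : ℝ) : 0 ≤ tent L x := le_max_left _ _

theorem tent_le_one {L : ℝ} (hL : 0 ≤ L) (x : ℝ) : tent L x ≤ 1 :=
  max_le zero_le_one (sub_le_self _ (by positivity))

theorem tent_neg (L x : ℝ) : tent L (-x) = tent L x := by simp [tent]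

theorem tent_eq_zero {L x : ℝ} (hL : 0 < L) (hx : L ≤ |x|) : tent L x = 0 :=
  max_eq_left (sub_nonpos.2 ((one_le_div hL).2 hx))

theorem tent_eq_of_mem_Icc {L x : ℝ} (hx : x ∈ Set.Icc 0 L) : tent L x = 1 - x / L := by
  rw [tent, abs_of_nonneg hx.1]
  exact max_eq_right (sub_nonneg.2 (div_le_one_of_le₀ hx.2 (hx.1.trans hx.2)))

noncomputable def partialFourierIntegral (g : ℝ → ℂ) (s R : ℝ) : ℂ :=
  ∫ x in (-R)..R, cexp (((s * x : ℝ) : ℂ) * I) * g x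

theorem partialFourierIntegral_const_mul (c : ℂ) (g : ℝ → ℂ) (s R : ℝ) :
    partialFourierIntegral (fun x => c * g x) s R = c * partialFourierIntegral g s R := by
  rw [partialFourierIntegral, partialFourierIntegral, ← intervalIntegral.integral_const_mul]
  congr 1 with x
  ring

theorem partialFourierIntegral_modulate (g : ℝ → ℂ) (ν s R : ℝ) :
    partialFourierIntegral (fun x => cexp ((-(ν * x) : ℝ) * I) * g x) s R =
      partialFourierIntegral g (s - ν) R := by
  unfold partialFourierIntegral
  congr 1 with x
  rw [← mul_assoc, ← Complex.exp_add]
  push_cast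
  ring_nf

theorem norm_partialFourierIntegral_le {g : ℝ → ℂ} {C : ℝ} (hg : ∀ x, ‖g x‖ ≤ C) (s : ℝ)
    {R : ℝ} (hR : 0 ≤ R) : ‖partialFourierIntegral g s R‖ ≤ 2 * R * C := by
  refine (intervalIntegral.norm_integral_le_of_norm_le_const (C := C) fun x _ => ?_).trans_eq ?_
  · rw [norm_mul, Complex.norm_exp_ofReal_mul_I, one_mul]
    exact hg x
  · rw [sub_neg_eq_add, abs_of_nonneg (by linarith)]
    ring

theorem partialFourierIntegral_eq_of_le {g : ℝ → ℂ} {L R : ℝ} (hg : ∀ x, L ≤ |x| → g x = 0)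
    (hg_cont : Continuous g) (hL : 0 ≤ L) (hLR : L ≤ R) (s : ℝ) :
    partialFourierIntegral g s R = partialFourierIntegral g s L := by
  set F := fun x : ℝ => cexp (((s * x : ℝ) : ℂ) * I) * g x
  have hF : Continuous F := by fun_prop
  have hF_zero : ∀ x, L ≤ |x| → F x = 0 := fun x hx => by simp [F, hg x hx]
  have left : ∫ x in (-R)..(-L), F x = 0 := by
    refine intervalIntegral.integral_zero_ae (Eventually.of_forall fun x hx => hF_zero x ?_)
    rw [Set.uIoc_of_le (by linarith)] at hx
    rw [abs_of_nonpos (by linarith [hx.2])]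
    linarith [hx.2]
  have right : ∫ x in L..R, F x = 0 := by
    refine intervalIntegral.integral_zero_ae (Eventually.of_forall fun x hx => hF_zero x ?_)
    rw [Set.uIoc_of_le hLR] at hx
    rw [abs_of_pos (by linarith [hx.1])]
    exact hx.1.le
  have split_left := intervalIntegral.integral_add_adjacent_intervals
    (μ := MeasureTheory.volume) (a := -R) (b := -L) (c := R)
    (hF.intervalIntegrable _ _) (hF.intervalIntegrable _ _)
  have split_right := intervalIntegral.integral_add_adjacent_intervals
    (μ := MeasureTheory.volume) (a := -L) (b := L) (c := R)
    (hF.intervalIntegrable _ _) (hF.intervalIntegrable _ _)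
  rw [left, zero_add] at split_left
  rw [right, add_zero] at split_right
  exact split_left.symm.trans split_right.symm

theorem partialFourierIntegral_eq_integral_add {g : ℝ → ℂ} (hg : Continuous g) (s R : ℝ) :
    partialFourierIntegral g s R = (∫ x in (0 : ℝ)..R, cexp (((s * x : ℝ) : ℂ) * I) * g x) +
      ∫ x in (0 : ℝ)..R, cexp (((-s * x : ℝ) : ℂ) * I) * g (-x) := by
  set F := fun x : ℝ => cexp (((s * x : ℝ) : ℂ) * I) * g x
  have hF : Continuous F := by fun_prop
  have reflect : ∫ x in (0 : ℝ)..R, cexp (((-s * x : ℝ) : ℂ) * I) * g (-x) =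
      ∫ x in (-R)..0, F x := by
    rw [← neg_zero, ← intervalIntegral.integral_comp_neg, neg_zero]
    congr 1 with x
    simp [F]
  rw [reflect, add_comm, intervalIntegral.integral_add_adjacent_intervals
    (hF.intervalIntegrable _ _) (hF.intervalIntegrable _ _)]
  rfl

noncomputable def tentPrimitive (u : ℂ) (L : ℝ) (z : ℂ) : ℂ :=
  cexp (u * z) * ((1 - z / L) / u + 1 / (u ^ 2 * L))

theorem hasDerivAt_tentPrimitive {u : ℂ} (hu : u ≠ 0) {L : ℝ} (hL : L ≠ 0) (z : ℂ) :
    HasDerivAt (tentPrimitive u L) (cexp (u * z) * (1 - z / L)) z := by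
  have hLc : (L : ℂ) ≠ 0 := ofReal_ne_zero.2 hL
  have hexp : HasDerivAt (fun z => cexp (u * z)) (cexp (u * z) * u) z := by
    simpa using ((hasDerivAt_id z).const_mul u).cexp
  have hpoly : HasDerivAt (fun z => (1 - z / L) / u + 1 / (u ^ 2 * L)) (-(1 / L) / u) z := by
    simpa using (((hasDerivAt_id z).div_const (L : ℂ)).const_sub 1).div_const u
      |>.add_const (1 / (u ^ 2 * L))
  refine (hexp.mul hpoly).congr_deriv ?_
  field_simp
  ring

theorem integral_exp_mul_tent {u : ℂ} (hu : u ≠ 0) {L R : ℝ} (hR : R ∈ Set.Icc 0 L) :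
    ∫ x in (0 : ℝ)..R, cexp (u * x) * (tent L x : ℂ) = tentPrimitive u L R - tentPrimitive u L 0 := by
  rcases eq_or_ne L 0 with rfl | hL
  · obtain rfl : R = 0 := le_antisymm hR.2 hR.1
    simp
  have ftc := intervalIntegral.integral_eq_sub_of_hasDerivAt (a := 0) (b := R)
    (fun x _ => (hasDerivAt_tentPrimitive hu hL x).comp_ofReal)
    (Continuous.intervalIntegrable (by fun_prop) _ _)
  rw [ofReal_zero] at ftc
  rw [← ftc]
  refine intervalIntegral.integral_congr fun x hx => ?_
  rw [Set.uIcc_of_le hR.1] at hx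
  simp [tent_eq_of_mem_Icc ⟨hx.1, hx.2.trans hR.2⟩]

theorem norm_tentPrimitive_le {t L x : ℝ} (ht : 1 ≤ |t|) (hL : 1 ≤ L) (hx : x ∈ Set.Icc 0 L) :
    ‖tentPrimitive (t * I) L x‖ ≤ 2 := by
  have hxL : 0 ≤ 1 - x / L := sub_nonneg.2 (div_le_one_of_le₀ hx.2 (by linarith))
  have hxL' : 1 - x / L ≤ 1 := sub_le_self _ (div_nonneg hx.1 (by linarith))
  have ht2 : 1 ≤ |t| ^ 2 := one_le_pow₀ ht
  rw [tentPrimitive, norm_mul, show (t : ℂ) * I * x = ((t * x : ℝ) : ℂ) * I by push_cast; ring,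
    norm_exp_ofReal_mul_I, one_mul]
  calc ‖(1 - (x : ℂ) / L) / (t * I) + 1 / ((t * I) ^ 2 * L)‖
      ≤ ‖(1 - (x : ℂ) / L) / (t * I)‖ + ‖1 / ((t * I) ^ 2 * L)‖ := norm_add_le _ _
    _ = (1 - x / L) / |t| + 1 / (|t| ^ 2 * L) := by
      rw [show (1 - (x : ℂ) / L) = ((1 - x / L : ℝ) : ℂ) by push_cast; ring]
      simp only [norm_div, norm_mul, norm_pow, norm_real, norm_I, mul_one, norm_one]
      rw [Real.norm_of_nonneg hxL, Real.norm_of_nonneg (by linarith : 0 ≤ L), Real.norm_eq_abs]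
    _ ≤ 1 + 1 := by
      gcongr
      · exact div_le_one_of_le₀ (hxL'.trans ht) (by positivity)
      · rw [div_le_one (by positivity)]; nlinarith
    _ = 2 := by norm_num

theorem partialFourierIntegral_tent_of_mem_Icc {t L R : ℝ} (ht : t ≠ 0) (hR : R ∈ Set.Icc 0 L) :
    partialFourierIntegral (fun x => (tent L x : ℂ)) t R =
      tentPrimitive (t * I) L R - tentPrimitive (t * I) L 0 +
        (tentPrimitive (-t * I) L R - tentPrimitive (-t * I) L 0) := by
  have htI : (t : ℂ) * I ≠ 0 := mul_ne_zero (ofReal_ne_zero.2 ht) I_ne_zero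
  have htI' : -(t : ℂ) * I ≠ 0 := by rw [neg_mul]; exact neg_ne_zero.2 htI
  rw [partialFourierIntegral_eq_integral_add (by fun_prop), ← integral_exp_mul_tent htI hR,
    ← integral_exp_mul_tent htI' hR]
  congr 1 <;> refine intervalIntegral.integral_congr fun x _ => ?_ <;>
    simp only [tent_neg, ofReal_mul, ofReal_neg] <;> ring_nf

theorem partialFourierIntegral_tent_of_le {L R : ℝ} (hL : 0 < L) (hLR : L ≤ R) (t : ℝ) :
    partialFourierIntegral (fun x => (tent L x : ℂ)) t R =
      partialFourierIntegral (fun x => (tent L x : ℂ)) t L :=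
  partialFourierIntegral_eq_of_le (fun x hx => by simp [tent_eq_zero hL hx]) (by fun_prop) hL.le
    hLR t

theorem norm_partialFourierIntegral_tent_le_two_mul (t : ℝ) {L R : ℝ} (hL : 0 < L) (hR : 0 ≤ R) :
    ‖partialFourierIntegral (fun x => (tent L x : ℂ)) t R‖ ≤ 2 * L := by
  wlog hRL : R ≤ L generalizing R
  · rw [partialFourierIntegral_tent_of_le hL (not_le.1 hRL).le]
    exact this hL.le le_rfl
  have tent_norm_le : ∀ x, ‖(tent L x : ℂ)‖ ≤ 1 := fun x => by
    rw [norm_real, Real.norm_of_nonneg (tent_nonneg _ _)]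
    exact tent_le_one hL.le x
  calc _ ≤ 2 * R * 1 := norm_partialFourierIntegral_le tent_norm_le t hR
    _ ≤ 2 * L := by linarith

theorem norm_partialFourierIntegral_tent_le {t L R : ℝ} (ht : 1 ≤ |t|) (hL : 1 ≤ L) (hR : 0 ≤ R) :
    ‖partialFourierIntegral (fun x => (tent L x : ℂ)) t R‖ ≤ 8 := by
  wlog hRL : R ≤ L generalizing R
  · rw [partialFourierIntegral_tent_of_le (by linarith) (not_le.1 hRL).le]
    exact this (by linarith) le_rfl
  have ht0 : t ≠ 0 := by rintro rfl; simp at ht; linarith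
  have hR' : R ∈ Set.Icc 0 L := ⟨hR, hRL⟩
  have hneg : -(t : ℂ) * I = ((-t : ℝ) : ℂ) * I := by push_cast; ring
  have ht' : 1 ≤ |-t| := by rwa [abs_neg]
  rw [partialFourierIntegral_tent_of_mem_Icc ht0 hR', hneg]
  have half : ∀ s : ℝ, 1 ≤ |s| →
      ‖tentPrimitive (s * I) L R - tentPrimitive (s * I) L 0‖ ≤ 4 := fun s hs => by
    have at_zero := norm_tentPrimitive_le hs hL ⟨le_rfl, (by linarith : (0 : ℝ) ≤ L)⟩
    rw [ofReal_zero] at at_zero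
    linarith [norm_sub_le (tentPrimitive (s * I) L R) (tentPrimitive (s * I) L 0),
      norm_tentPrimitive_le hs hL hR']
  calc _ ≤ 4 + 4 := (norm_add_le _ _).trans (add_le_add (half t ht) (half (-t) ht'))
    _ = 8 := by norm_num

theorem partialFourierIntegral_tent_self {t L : ℝ} (ht : t ≠ 0) (hL : 0 < L) :
    partialFourierIntegral (fun x => (tent L x : ℂ)) t L =
      ((2 * (1 - Real.cos (t * L)) / (t ^ 2 * L) : ℝ) : ℂ) := by
  have htc : (t : ℂ) ≠ 0 := ofReal_ne_zero.2 ht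
  have hLc : (L : ℂ) ≠ 0 := ofReal_ne_zero.2 hL.ne'
  have hcos : cexp (t * I * L) + cexp (-(t * I * L)) = 2 * Real.cos (t * L) := by
    rw [ofReal_cos, Complex.cos, ofReal_mul]; ring_nf
  rw [partialFourierIntegral_tent_of_mem_Icc ht ⟨hL.le, le_rfl⟩]
  simp only [tentPrimitive, mul_zero, Complex.exp_zero, zero_div, sub_zero, div_self hLc,
    sub_self]
  rw [ofReal_div, ofReal_mul, ofReal_mul, ofReal_sub, ofReal_one, ofReal_pow, ofReal_ofNat]
  field_simp
  linear_combination hcos - 2 * (1 - (Real.cos (t * L) : ℂ)) * I_sq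

theorem partialFourierIntegral_tent_zero_self {L : ℝ} (hL : 0 < L) :
    partialFourierIntegral (fun x => (tent L x : ℂ)) 0 L = L := by
  have half : ∫ x in (0 : ℝ)..L, tent L x = L / 2 := by
    rw [intervalIntegral.integral_congr (g := fun x => 1 - x / L) fun x hx =>
      tent_eq_of_mem_Icc (by rwa [Set.uIcc_of_le hL.le] at hx)]
    rw [intervalIntegral.integral_sub intervalIntegrable_const
      (intervalIntegral.intervalIntegrable_id.div_const _), intervalIntegral.integral_const,
      intervalIntegral.integral_div, integral_id, smul_eq_mul]
    field_simp
    ring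
  rw [partialFourierIntegral_eq_integral_add (by fun_prop)]
  simp only [neg_zero, zero_mul, ofReal_zero, Complex.exp_zero, one_mul, tent_neg,
    intervalIntegral.integral_ofReal, half]
  push_cast
  ring

theorem re_partialFourierIntegral_tent_self_nonneg (t : ℝ) {L : ℝ} (hL : 0 < L) :
    0 ≤ (partialFourierIntegral (fun x => (tent L x : ℂ)) t L).re := by
  rcases eq_or_ne t 0 with rfl | ht
  · rw [partialFourierIntegral_tent_zero_self hL, ofReal_re]
    exact hL.le
  · rw [partialFourierIntegral_tent_self ht hL, ofReal_re]
    have := Real.cos_le_one (t * L)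
    positivity

theorem partialFourierIntegral_tsum {ι : Type*} [Countable ι] {g : ι → ℝ → ℂ} {C : ι → ℝ}
    (hg : ∀ k, Continuous (g k)) (hC : Summable C) (hgC : ∀ k x, ‖g k x‖ ≤ C k) (s R : ℝ) :
    partialFourierIntegral (fun x => ∑' k, g k x) s R = ∑' k, partialFourierIntegral (g k) s R := by
  refine (intervalIntegral.hasSum_integral_of_dominated_convergence (fun k _ => C k)
    (fun k => (Continuous.aestronglyMeasurable (by fun_prop))) (fun k => ?_)
    (Eventually.of_forall fun _ _ => hC) intervalIntegrable_const
    (Eventually.of_forall fun x _ => ?_)).tsum_eq.symm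
  · refine Eventually.of_forall fun x _ => ?_
    rw [norm_mul, norm_exp_ofReal_mul_I, one_mul]
    exact hgC k x
  · exact ((Summable.of_norm_bounded hC fun k => hgC k x).hasSum).mul_left _

section TentSeries

variable (c L : ℕ → ℝ)

noncomputable def tentSeriesTerm (k : ℕ) (x : ℝ) : ℂ :=
  c k * (cexp ((-(k * x) : ℝ) * I) * tent (L k) x)

noncomputable def tentSeries (x : ℝ) : ℂ := ∑' k, tentSeriesTerm c L k x

noncomputable def tentSeriesTransform (s : ℝ) : ℂ :=
  ∑' k, c k * partialFourierIntegral (fun x => (tent (L k) x : ℂ)) (s - k) (L k)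

variable {c L}

@[fun_prop]
theorem continuous_tentSeriesTerm (k : ℕ) : Continuous (tentSeriesTerm c L k) := by
  unfold tentSeriesTerm; fun_prop

theorem norm_tentSeriesTerm_le (hL : ∀ k, 0 ≤ L k) (k : ℕ) (x : ℝ) :
    ‖tentSeriesTerm c L k x‖ ≤ ‖c k‖ := by
  rw [tentSeriesTerm, norm_mul, norm_mul, norm_exp_ofReal_mul_I, one_mul, norm_real, norm_real,
    Real.norm_of_nonneg (tent_nonneg _ _)]
  exact mul_le_of_le_one_right (norm_nonneg _) (tent_le_one (hL k) x)

theorem continuous_tentSeries (hc : Summable c) (hL : ∀ k, 0 ≤ L k) :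
    Continuous (tentSeries c L) :=
  continuous_tsum continuous_tentSeriesTerm hc.norm (norm_tentSeriesTerm_le hL)

theorem partialFourierIntegral_tentSeries (hc : Summable c) (hL : ∀ k, 0 ≤ L k) (s R : ℝ) :
    partialFourierIntegral (tentSeries c L) s R =
      ∑' k, c k * partialFourierIntegral (fun x => (tent (L k) x : ℂ)) (s - k) R := by
  unfold tentSeries
  rw [partialFourierIntegral_tsum continuous_tentSeriesTerm hc.norm
    (norm_tentSeriesTerm_le hL)]
  congr 1 with k
  rw [← partialFourierIntegral_modulate, ← partialFourierIntegral_const_mul]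
  rfl

theorem exists_summable_bound_partialFourierIntegral_tent (hc : Summable c) (hL : ∀ k, 1 ≤ L k)
    (s : ℝ) : ∃ B : ℕ → ℝ, Summable B ∧ ∀ k, ∀ R, 0 ≤ R →
      ‖c k * partialFourierIntegral (fun x => (tent (L k) x : ℂ)) (s - k) R‖ ≤ B k := by
  refine ⟨fun k => ‖c k‖ * if |s - k| < 1 then 2 * L k else 8, ?_, fun k R hR => ?_⟩
  · refine (hc.norm.mul_right 8).congr_atTop ?_
    filter_upwards [tendsto_natCast_atTop_atTop.eventually_ge_atTop (s + 1)] with k hk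
    rw [if_neg (not_lt.2 (by rw [abs_sub_comm]; exact le_abs.2 (Or.inl (by linarith))))]
  · rw [norm_mul, norm_real]
    refine mul_le_mul_of_nonneg_left ?_ (norm_nonneg _)
    split_ifs with hk
    · exact norm_partialFourierIntegral_tent_le_two_mul _ (by linarith [hL k]) hR
    · exact norm_partialFourierIntegral_tent_le (not_lt.1 hk) (hL k) hR

theorem tendsto_partialFourierIntegral_tentSeries (hc : Summable c) (hL : ∀ k, 1 ≤ L k) (s : ℝ) :
    Tendsto (partialFourierIntegral (tentSeries c L) s) atTop
      (nhds (tentSeriesTransform c L s)) := by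
  have hL0 : ∀ k, 0 ≤ L k := fun k => by linarith [hL k]
  obtain ⟨B, hB, hbound⟩ := exists_summable_bound_partialFourierIntegral_tent hc hL s
  refine (tendsto_tsum_of_dominated_convergence hB (fun k => ?_)
    ((eventually_ge_atTop 0).mono fun R hR k => hbound k R hR)).congr' ?_
  · refine tendsto_const_nhds.congr' ?_
    filter_upwards [eventually_ge_atTop (L k)] with R hR
    rw [partialFourierIntegral_tent_of_le (by linarith [hL k]) hR]
  · filter_upwards with R
    rw [partialFourierIntegral_tentSeries hc hL0]

theorem le_re_tentSeriesTransform (hc : Summable c) (hc0 : ∀ k, 0 ≤ c k) (hL : ∀ k, 1 ≤ L k)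
    (n : ℕ) : c n * L n ≤ (tentSeriesTransform c L n).re := by
  have hL0 : ∀ k, 0 < L k := fun k => by linarith [hL k]
  obtain ⟨B, hB, hbound⟩ := exists_summable_bound_partialFourierIntegral_tent hc hL n
  have hsum := Summable.of_norm_bounded hB fun k => hbound k (L k) (hL0 k).le
  have hterm : ∀ k, ((c k : ℂ) * partialFourierIntegral (fun x => (tent (L k) x : ℂ))
      (n - k) (L k)).re = c k * (partialFourierIntegral (fun x => (tent (L k) x : ℂ))
      (n - k) (L k)).re := fun k => re_ofReal_mul _ _
  rw [tentSeriesTransform, re_tsum hsum]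
  refine le_of_eq_of_le ?_ ((hasSum_re hsum.hasSum).summable.le_tsum n fun k _ => ?_)
  · rw [hterm, sub_self, partialFourierIntegral_tent_zero_self (hL0 n), ofReal_re]
  · rw [hterm]
    exact mul_nonneg (hc0 k) (re_partialFourierIntegral_tent_self_nonneg _ (hL0 k))

end TentSeries

theorem stmt9_general (a : ℕ → ℝ) :
    ∃ f : ℝ → ℂ, Continuous f ∧ ∃ fhat : ℝ → ℂ,
      (∀ s : ℝ, Tendsto
        (fun R : ℝ => ∫ x in (-R)..R, Complex.exp (((s * x : ℝ) : ℂ) * Complex.I) * f x)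
        atTop (nhds (fhat s))) ∧
      (∀ n : ℕ, 0 < n → a n ≤ (fhat n).re) := by
  set c : ℕ → ℝ := fun k => (1 / 2) ^ k
  set L : ℕ → ℝ := fun k => 2 ^ k * |a k| + 1
  have hc : Summable c := summable_geometric_two
  have hc0 : ∀ k, 0 ≤ c k := fun k => by positivity
  have hL : ∀ k, 1 ≤ L k := fun k => le_add_of_nonneg_left (by positivity)
  have hcL : ∀ k, a k ≤ c k * L k := fun k => by
    simp only [c, L]
    rw [mul_add, ← mul_assoc, ← mul_pow, one_div, inv_mul_cancel₀ two_ne_zero, one_pow, one_mul]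
    linarith [le_abs_self (a k), hc0 k]
  refine ⟨tentSeries c L, continuous_tentSeries hc fun k => by linarith [hL k],
    tentSeriesTransform c L, tendsto_partialFourierIntegral_tentSeries hc hL,
    fun n _ => (hcL n).trans (le_re_tentSeriesTransform hc hc0 hL n)⟩

theorem stmt9 (a : ℕ → ℝ) (ha : ∀ n, 0 < a n) :
    ∃ f : ℝ → ℂ, Continuous f ∧ ∃ fhat : ℝ → ℂ,
      (∀ s : ℝ, Tendsto
        (fun R : ℝ => ∫ x in (-R)..R, Complex.exp (((s * x : ℝ) : ℂ) * Complex.I) * f x)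
        atTop (nhds (fhat s))) ∧
      (∀ n : ℕ, 0 < n → a n ≤ (fhat n).re) :=
  stmt9_general a
end

section
/- The improper integral ∫_{0}^{∞} x^α e^{i(a x² − s x)} dx converges for all real s, a > 0, and |α| < 1. -/
open Filter Real Complex MeasureTheory Set Topology

/-! Near `0` the integrand is bounded by `x ^ α`, which is integrable since `α > -1`. On `[T, ∞)`,
where the phase `φ x = a x² - s x` has `φ' x = 2 a x - s ≥ a x`, write
`x ^ α e^{i φ} = u · (-i e^{i φ})'` with `u = x ^ α / φ'` and integrate by parts: `u → 0` since
`α < 1`, `|u'| = O(x ^ (α - 2))` is integrable, and `-i e^{i φ}` has modulus one. -/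

theorem exists_tendsto_intervalIntegral_of_tendsto_tail {E : Type*} [NormedAddCommGroup E]
    [NormedSpace ℝ E] {f : ℝ → E} {a T : ℝ} {L : E}
    (hf : ∀ R, IntervalIntegrable f volume a R)
    (hT : Tendsto (fun R => ∫ x in T..R, f x) atTop (𝓝 L)) :
    ∃ L', Tendsto (fun R => ∫ x in a..R, f x) atTop (𝓝 L') :=
  ⟨(∫ x in a..T, f x) + L, (tendsto_const_nhds.add hT).congr fun R =>
    intervalIntegral.integral_add_adjacent_intervals (hf T) ((hf T).symm.trans (hf R))⟩

theorem exists_tendsto_intervalIntegral_mul_deriv {A : Type*} [NormedRing A] [NormedAlgebra ℝ A]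
    [CompleteSpace A] {u u' v v' : ℝ → A} {T C : ℝ}
    (hu : ∀ x ∈ Ici T, HasDerivAt u (u' x) x) (hv : ∀ x ∈ Ici T, HasDerivAt v (v' x) x)
    (hu' : IntegrableOn u' (Ioi T)) (hv' : ContinuousOn v' (Ici T))
    (hu_zero : Tendsto u atTop (𝓝 0)) (hv_bdd : ∀ x ∈ Ici T, ‖v x‖ ≤ C) :
    ∃ L, Tendsto (fun R => ∫ x in T..R, u x * v' x) atTop (𝓝 L) := by
  have hv_cont : ContinuousOn v (Ici T) := fun x hx => (hv x hx).continuousAt.continuousWithinAt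
  have hu'v : IntegrableOn (fun x => u' x * v x) (Ioi T) :=
    hu'.mul_bdd ((hv_cont.mono Ioi_subset_Ici_self).aestronglyMeasurable measurableSet_Ioi)
      ((ae_restrict_iff' measurableSet_Ioi).2
        (Eventually.of_forall fun x hx => hv_bdd x (Ioi_subset_Ici_self hx)))
  have h_boundary : Tendsto (fun R => u R * v R) atTop (𝓝 0) :=
    hu_zero.zero_mul_isBoundedUnder_le
      ⟨C, eventually_map.2 ((eventually_ge_atTop T).mono fun x hx => hv_bdd x hx)⟩
  refine ⟨0 - u T * v T - ∫ x in Ioi T, u' x * v x, ?_⟩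
  refine ((h_boundary.sub_const _).sub
    (intervalIntegral_tendsto_integral_Ioi T hu'v tendsto_id)).congr' ?_
  filter_upwards [eventually_ge_atTop T] with R hR
  have hsub : uIcc T R ⊆ Ici T := by rw [uIcc_of_le hR]; exact Icc_subset_Ici_self
  refine (intervalIntegral.integral_mul_deriv_eq_deriv_mul (fun x hx => hu x (hsub hx))
    (fun x hx => hv x (hsub hx)) ?_ ((hv'.mono hsub).intervalIntegrable)).symm
  exact (intervalIntegrable_iff_integrableOn_Ioc_of_le hR).2 (hu'.mono_set Ioc_subset_Ioi_self)

section Amplitude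

variable {α b c s x : ℝ}

theorem hasDerivAt_rpow_div_sub (hx : 0 < x) (hd : c * x - s ≠ 0) :
    HasDerivAt (fun y => y ^ α / (c * y - s))
      (α * x ^ (α - 1) / (c * x - s) - c * x ^ α / (c * x - s) ^ 2) x := by
  have hlin : HasDerivAt (fun y => c * y - s) c x := by
    simpa using ((hasDerivAt_id x).const_mul c).sub_const s
  refine ((hasDerivAt_rpow_const (p := α) (Or.inl hx.ne')).div hlin hd).congr_deriv ?_
  field_simp

theorem abs_rpow_div_sub_le (hb : 0 < b) (hx : 0 < x) (hbx : b * x ≤ c * x - s) :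
    |x ^ α / (c * x - s)| ≤ x ^ (α - 1) / b := by
  have hd : 0 < c * x - s := (mul_pos hb hx).trans_le hbx
  rw [abs_of_nonneg (div_nonneg (rpow_nonneg hx.le α) hd.le), rpow_sub_one hx.ne', div_div,
    mul_comm x b]
  gcongr

theorem abs_deriv_rpow_div_sub_le (hb : 0 < b) (hx : 0 < x) (hbx : b * x ≤ c * x - s) :
    |α * x ^ (α - 1) / (c * x - s) - c * x ^ α / (c * x - s) ^ 2| ≤
      (|α| / b + |c| / b ^ 2) * x ^ (α - 2) := by
  have hd : 0 < c * x - s := (mul_pos hb hx).trans_le hbx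
  have hpow : ∀ β : ℝ, 0 ≤ x ^ β := fun β => rpow_nonneg hx.le β
  have h1 : x ^ (α - 1) = x ^ (α - 2) * x := by
    rw [← rpow_add_one hx.ne']; ring_nf
  have h2 : x ^ α = x ^ (α - 2) * x ^ 2 := by
    rw [← rpow_natCast, ← rpow_add hx]; ring_nf
  calc _ ≤ |α * x ^ (α - 1) / (c * x - s)| + |c * x ^ α / (c * x - s) ^ 2| := abs_sub _ _
    _ = |α| * x ^ (α - 1) / (c * x - s) + |c| * x ^ α / (c * x - s) ^ 2 := by
      rw [abs_div, abs_div, abs_mul, abs_mul, abs_of_nonneg (hpow _), abs_of_nonneg (hpow _),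
        abs_of_pos hd, abs_of_pos (pow_pos hd 2)]
    _ ≤ |α| * x ^ (α - 1) / (b * x) + |c| * x ^ α / (b * x) ^ 2 := by
      gcongr
    _ = (|α| / b + |c| / b ^ 2) * x ^ (α - 2) := by
      rw [h1, h2]; field_simp

theorem tendsto_rpow_div_sub_atTop (hα : α < 1) (hc : 0 < c) :
    Tendsto (fun x => x ^ α / (c * x - s)) atTop (𝓝 0) := by
  have hdecay : Tendsto (fun x : ℝ => x ^ (α - 1) / (c / 2)) atTop (𝓝 0) := by
    simpa using (tendsto_rpow_neg_atTop (y := 1 - α) (by linarith)).div_const (c / 2)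
  refine squeeze_zero_norm' ?_ hdecay
  filter_upwards [eventually_gt_atTop 0, eventually_ge_atTop (2 * s / c)] with x hx hsx
  have : 2 * s ≤ c * x := by rwa [div_le_iff₀' hc] at hsx
  exact abs_rpow_div_sub_le (half_pos hc) hx (by linarith)

theorem integrableOn_Ioi_deriv_rpow_div_sub (hb : 0 < b) {T : ℝ} (hT : 0 < T)
    (hbT : ∀ x ∈ Ioi T, b * x ≤ c * x - s) (hα : α < 1) :
    IntegrableOn (fun x => α * x ^ (α - 1) / (c * x - s) - c * x ^ α / (c * x - s) ^ 2)
      (Ioi T) := by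
  refine ((integrableOn_Ioi_rpow_of_lt (by linarith : α - 2 < -1) hT).const_mul
    (|α| / b + |c| / b ^ 2)).mono' (by fun_prop) ?_
  refine (ae_restrict_iff' measurableSet_Ioi).2 (Eventually.of_forall fun x hx => ?_)
  exact abs_deriv_rpow_div_sub_le hb (hT.trans hx) (hbT x hx)

end Amplitude

theorem hasDerivAt_neg_I_mul_cexp_phase (a s x : ℝ) :
    HasDerivAt (fun y : ℝ => -I * exp (((a * y ^ 2 - s * y : ℝ) : ℂ) * I))
      (((2 * a * x - s : ℝ) : ℂ) * exp (((a * x ^ 2 - s * x : ℝ) : ℂ) * I)) x := by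
  have hφ : HasDerivAt (fun y => a * y ^ 2 - s * y) (2 * a * x - s) x :=
    (((hasDerivAt_pow 2 x).const_mul a).sub ((hasDerivAt_id x).const_mul s)).congr_deriv
      (by ring)
  refine ((hφ.ofReal_comp.mul_const I).cexp.const_mul (-I)).congr_deriv ?_
  linear_combination (-((2 * a * x - s : ℝ) : ℂ) * exp (((a * x ^ 2 - s * x : ℝ) : ℂ) * I)) * I_sq

theorem exists_tendsto_intervalIntegral_rpow_mul_cexp_phase {s a α : ℝ} (ha : 0 < a)
    (hα : α < 1) : ∃ T L, Tendsto (fun R => ∫ x in T..R,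
      ((x ^ α : ℝ) : ℂ) * exp (((a * x ^ 2 - s * x : ℝ) : ℂ) * I)) atTop (𝓝 L) := by
  set T := max 1 (s / a)
  have hT : 0 < T := zero_lt_one.trans_le (le_max_left _ _)
  have hslope : ∀ x ∈ Ici T, a * x ≤ 2 * a * x - s := fun x hx => by
    linarith [(div_le_iff₀' ha).1 ((le_max_right _ _).trans hx)]
  have hslope_ne : ∀ x ∈ Ici T, 2 * a * x - s ≠ 0 := fun x hx =>
    ((mul_pos ha (hT.trans_le hx)).trans_le (hslope x hx)).ne'
  obtain ⟨L, hL⟩ := exists_tendsto_intervalIntegral_mul_deriv (C := 1)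
    (u := fun x => ((x ^ α / (2 * a * x - s) : ℝ) : ℂ))
    (fun x hx => (hasDerivAt_rpow_div_sub (hT.trans_le hx) (hslope_ne x hx)).ofReal_comp)
    (fun x _ => hasDerivAt_neg_I_mul_cexp_phase a s x)
    (integrableOn_Ioi_deriv_rpow_div_sub ha hT (fun x hx => hslope x (Ioi_subset_Ici_self hx))
      hα).ofReal
    (by fun_prop)
    (by simpa only [ofReal_zero] using
      (tendsto_rpow_div_sub_atTop hα (by positivity : (0 : ℝ) < 2 * a)).ofReal)
    (fun x _ => by rw [norm_mul, norm_neg, norm_I, one_mul, norm_exp_ofReal_mul_I])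
  refine ⟨T, L, hL.congr' ?_⟩
  filter_upwards [eventually_ge_atTop T] with R hR
  refine intervalIntegral.integral_congr fun x hx => ?_
  have hdx := ofReal_ne_zero.2 (hslope_ne x (by rw [uIcc_of_le hR] at hx; exact hx.1))
  rw [ofReal_div, ← mul_assoc, div_mul_cancel₀ _ hdx]

theorem stmt12 (s a α : ℝ) (ha : 0 < a) (hα : |α| < 1) :
    ∃ L : ℂ, Tendsto
      (fun R : ℝ => ∫ x in (0:ℝ)..R,
        ((x ^ α : ℝ) : ℂ) * Complex.exp (((a * x ^ 2 - s * x : ℝ) : ℂ) * Complex.I))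
      atTop (nhds L) := by
  obtain ⟨hα_gt, hα_lt⟩ := abs_lt.mp hα
  obtain ⟨T, L, hL⟩ := exists_tendsto_intervalIntegral_rpow_mul_cexp_phase (s := s) ha hα_lt
  refine exists_tendsto_intervalIntegral_of_tendsto_tail (fun R => ?_) hL
  have hrpow := intervalIntegral.intervalIntegrable_rpow' hα_gt (a := 0) (b := R)
  exact IntervalIntegrable.mul_continuousOn ⟨hrpow.1.ofReal, hrpow.2.ofReal⟩ (by fun_prop)
end

section
/- The Fresnel integrals C(x) = (1/√(2π)) ∫_0^x cos(t)/√t dt and S(x) = (1/√(2π)) ∫_0^x sin(t)/√t dt converge as x → ∞, and C(∞) + i S(∞) = e^{iπ/4}/√2. -/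
/-
Gaussian subordination: for `t > 0`, `1 / √t = (2 / √π) ∫₀^∞ exp (-t u²) du`. Inserting this
into `∫₀^x e^{it} / √t dt` and exchanging the integrals (Tonelli applies since the absolute
integrand integrates to `1 / √t`), the inner integral is elementary:
`∫₀^x e^{(i - u²) t} dt = (1 - e^{(i - u²) x}) / (u² - i)`.
Since `|u² - i| ≥ 1`, the `x`-dependent part is bounded by `∫₀^∞ exp (-x u²) du = √π / (2√x)`,
so the integral tends to `(2 / √π) ∫₀^∞ du / (u² - i)`, where `1 / (u² - i) = (u² + i) / (1 + u⁴)`.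
The substitution `u ↦ 1 / u` shows that `u² / (1 + u⁴)` and `1 / (1 + u⁴)` have the same
integral, and `arctan (√2 u + 1) + arctan (√2 u - 1)` is a primitive of their sum times `√2`,
so each equals `π / (2√2)`. Hence `∫₀^∞ e^{it} / √t dt = √π e^{iπ/4}`.
-/

open Filter Real Complex MeasureTheory Topology Set

lemma one_add_pow_four_pos (u : ℝ) : 0 < 1 + u ^ 4 := by positivity

lemma hasDerivAt_arctan_add_arctan (u : ℝ) :
    HasDerivAt (fun v => Real.arctan (√2 * v + 1) + Real.arctan (√2 * v - 1))
      (√2 * ((1 + u ^ 2) / (1 + u ^ 4))) u := by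
  have h2 : √2 ^ 2 = 2 := sq_sqrt zero_le_two
  have hlin (c : ℝ) : HasDerivAt (fun v => √2 * v + c) √2 u := by
    simpa using ((hasDerivAt_id u).const_mul √2).add_const c
  have h := ((Real.hasDerivAt_arctan _).comp u (hlin 1)).add
    ((Real.hasDerivAt_arctan _).comp u (hlin (-1)))
  simp only [← sub_eq_add_neg] at h
  refine h.congr_deriv ?_
  have hp : 0 < 1 + (√2 * u + 1) ^ 2 := by positivity
  have hm : 0 < 1 + (√2 * u - 1) ^ 2 := by positivity
  have h4 : √2 ^ 4 = 4 := by rw [show 4 = 2 * 2 by rfl, pow_mul, h2]; norm_num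
  field_simp
  linear_combination (2 * u ^ 2 + 2 * u ^ 6) * h2 - (u ^ 4 + u ^ 6) * h4

lemma one_add_sq_div_one_add_pow_four_le (u : ℝ) :
    (1 + u ^ 2) / (1 + u ^ 4) ≤ 2 * (1 + u ^ 2)⁻¹ := by
  rw [← div_eq_mul_inv, div_le_div_iff₀ (one_add_pow_four_pos u) (by positivity)]
  nlinarith [sq_nonneg (1 - u ^ 2)]

lemma integrable_one_add_sq_div_one_add_pow_four :
    Integrable fun u : ℝ => (1 + u ^ 2) / (1 + u ^ 4) := by
  refine (integrable_inv_one_add_sq.const_mul 2).mono'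
    (by fun_prop : Measurable _).aestronglyMeasurable (.of_forall fun u => ?_)
  rw [Real.norm_of_nonneg (by positivity)]
  exact one_add_sq_div_one_add_pow_four_le u

lemma integrable_one_div_one_add_pow_four : Integrable fun u : ℝ => 1 / (1 + u ^ 4) := by
  refine integrable_one_add_sq_div_one_add_pow_four.mono'
    (by fun_prop : Measurable _).aestronglyMeasurable (.of_forall fun u => ?_)
  rw [Real.norm_of_nonneg (by positivity)]
  gcongr
  linarith [sq_nonneg u]

lemma integrable_sq_div_one_add_pow_four : Integrable fun u : ℝ => u ^ 2 / (1 + u ^ 4) := by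
  refine integrable_one_add_sq_div_one_add_pow_four.mono'
    (by fun_prop : Measurable _).aestronglyMeasurable (.of_forall fun u => ?_)
  rw [Real.norm_of_nonneg (by positivity)]
  gcongr
  linarith

lemma integral_Ioi_one_add_sq_div_one_add_pow_four :
    ∫ u in Ioi (0 : ℝ), (1 + u ^ 2) / (1 + u ^ 4) = π / √2 := by
  have hlim : Tendsto (fun v => Real.arctan (√2 * v + 1) + Real.arctan (√2 * v - 1)) atTop
      (𝓝 (π / 2 + π / 2)) := by
    have harctan := tendsto_nhds_of_tendsto_nhdsWithin tendsto_arctan_atTop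
    have hlin (c : ℝ) : Tendsto (fun v => √2 * v + c) atTop atTop :=
      tendsto_atTop_add_const_right _ c
        (tendsto_id.const_mul_atTop (by positivity))
    exact ((harctan.comp (hlin 1)).add (harctan.comp (hlin (-1)))).congr fun v => by
      simp [sub_eq_add_neg]
  have h := integral_Ioi_of_hasDerivAt_of_tendsto' (a := 0)
    (fun u _ => hasDerivAt_arctan_add_arctan u)
    (integrable_one_add_sq_div_one_add_pow_four.const_mul √2).integrableOn hlim
  simp only [mul_zero, zero_add, zero_sub, Real.arctan_one, Real.arctan_neg, add_neg_cancel,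
    sub_zero] at h
  rw [integral_const_mul] at h
  field_simp at h ⊢
  linarith

lemma integral_Ioi_sq_div_one_add_pow_four_eq :
    ∫ u in Ioi (0 : ℝ), u ^ 2 / (1 + u ^ 4) = ∫ u in Ioi (0 : ℝ), 1 / (1 + u ^ 4) := by
  rw [← integral_comp_rpow_Ioi (fun u => 1 / (1 + u ^ 4)) (by norm_num : (-1 : ℝ) ≠ 0)]
  refine setIntegral_congr_fun measurableSet_Ioi fun u (hu : 0 < u) => ?_
  have h4 := one_add_pow_four_pos u
  have hu0 := hu.ne'
  rw [show (-1 - 1 : ℝ) = -(2 : ℕ) by norm_num, rpow_neg hu.le, rpow_neg_one, rpow_natCast]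
  rw [show 1 + u⁻¹ ^ 4 = (1 + u ^ 4) / u ^ 4 by field_simp; ring, abs_neg, abs_one, smul_eq_mul]
  field_simp

lemma integral_Ioi_one_div_one_add_pow_four :
    ∫ u in Ioi (0 : ℝ), 1 / (1 + u ^ 4) = π / (2 * √2) := by
  have h := integral_Ioi_one_add_sq_div_one_add_pow_four
  simp only [add_div] at h
  rw [integral_add integrable_one_div_one_add_pow_four.integrableOn
    integrable_sq_div_one_add_pow_four.integrableOn, integral_Ioi_sq_div_one_add_pow_four_eq] at h
  rw [div_mul_eq_div_div_swap, ← h]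
  ring

lemma integral_Ioi_exp_neg_mul_sq (t : ℝ) :
    ∫ u in Ioi (0 : ℝ), rexp (-t * u ^ 2) = √π / 2 * (√t)⁻¹ := by
  rw [integral_gaussian_Ioi, sqrt_div pi_pos.le]
  ring

section Subordination

variable {E : Type*} [NormedAddCommGroup E] [NormedSpace ℝ E] [CompleteSpace E]

lemma integral_inv_sqrt_smul_eq_integral_Ioi_exp_neg_mul_sq_smul {s : Set ℝ}
    (hs : MeasurableSet s) (hs0 : s ⊆ Ioi 0) {g : ℝ → E}
    (hg : IntegrableOn (fun t => (√t)⁻¹ • g t) s) :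
    ∫ t in s, (√t)⁻¹ • g t =
      (2 / √π) • ∫ u in Ioi (0 : ℝ), ∫ t in s, rexp (-t * u ^ 2) • g t := by
  have hgauss (t : ℝ) : ∫ u in Ioi (0 : ℝ), ‖rexp (-t * u ^ 2) • g t‖ =
      √π / 2 * ‖(√t)⁻¹ • g t‖ := by
    simp only [norm_smul, Real.norm_of_nonneg (exp_pos _).le,
      Real.norm_of_nonneg (inv_nonneg.2 (sqrt_nonneg t))]
    rw [integral_mul_const, integral_Ioi_exp_neg_mul_sq]
    ring
  have hgm : AEStronglyMeasurable g (volume.restrict s) := by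
    refine (continuous_sqrt.aestronglyMeasurable.smul hg.aestronglyMeasurable).congr ?_
    filter_upwards [ae_restrict_mem hs] with t ht
    exact smul_inv_smul₀ (sqrt_pos.2 (hs0 ht)).ne' (g t)
  have hint : Integrable (Function.uncurry fun t u => rexp (-t * u ^ 2) • g t)
      ((volume.restrict s).prod (volume.restrict (Ioi 0))) := by
    have hm : AEStronglyMeasurable (Function.uncurry fun t u => rexp (-t * u ^ 2) • g t)
        ((volume.restrict s).prod (volume.restrict (Ioi 0))) :=
      (Continuous.aestronglyMeasurable (by fun_prop)).smul hgm.comp_fst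
    refine (integrable_prod_iff hm).2 ⟨?_, ?_⟩
    · filter_upwards [ae_restrict_mem hs] with t ht
      exact ((integrable_exp_neg_mul_sq (hs0 ht)).smul_const (g t)).integrableOn
    · exact (hg.norm.const_mul (√π / 2)).congr (.of_forall fun t => (hgauss t).symm)
  calc ∫ t in s, (√t)⁻¹ • g t
      = ∫ t in s, (2 / √π) • ∫ u in Ioi (0 : ℝ), rexp (-t * u ^ 2) • g t := by
        refine setIntegral_congr_fun hs fun t ht => ?_
        rw [integral_smul_const, integral_Ioi_exp_neg_mul_sq, smul_smul]
        field_simp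
    _ = (2 / √π) • ∫ u in Ioi (0 : ℝ), ∫ t in s, rexp (-t * u ^ 2) • g t := by
        rw [integral_smul, integral_integral_swap hint]

end Subordination

lemma one_le_norm_sq_sub_I (u : ℝ) : 1 ≤ ‖(u : ℂ) ^ 2 - I‖ := by
  calc 1 = |((u : ℂ) ^ 2 - I).im| := by simp [← ofReal_pow]
    _ ≤ ‖(u : ℂ) ^ 2 - I‖ := abs_im_le_norm _

lemma sq_sub_I_ne_zero (u : ℝ) : (u : ℂ) ^ 2 - I ≠ 0 :=
  norm_pos_iff.1 (one_pos.trans_le (one_le_norm_sq_sub_I u))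

lemma one_div_sq_sub_I (u : ℝ) :
    1 / ((u : ℂ) ^ 2 - I) = ((u ^ 2 / (1 + u ^ 4) : ℝ) : ℂ) + ((1 / (1 + u ^ 4) : ℝ) : ℂ) * I := by
  have h4 : ((1 + u ^ 4 : ℝ) : ℂ) ≠ 0 := ofReal_ne_zero.2 (one_add_pow_four_pos u).ne'
  rw [div_eq_iff (sq_sub_I_ne_zero u)]
  push_cast at h4 ⊢
  field_simp
  ring_nf
  rw [I_sq]
  ring

lemma integrable_one_div_sq_sub_I : Integrable fun u : ℝ => 1 / ((u : ℂ) ^ 2 - I) := by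
  simp only [one_div_sq_sub_I]
  exact integrable_sq_div_one_add_pow_four.ofReal.add
    (integrable_one_div_one_add_pow_four.ofReal.mul_const I)

lemma integral_Ioi_one_div_sq_sub_I :
    ∫ u in Ioi (0 : ℝ), 1 / ((u : ℂ) ^ 2 - I) = π / (2 * √2) * (1 + I) := by
  have hre : Integrable fun u : ℝ => ((u ^ 2 / (1 + u ^ 4) : ℝ) : ℂ) :=
    integrable_sq_div_one_add_pow_four.ofReal
  have him : Integrable fun u : ℝ => ((1 / (1 + u ^ 4) : ℝ) : ℂ) * I :=
    integrable_one_div_one_add_pow_four.ofReal.mul_const I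
  simp only [one_div_sq_sub_I]
  rw [integral_add hre.restrict him.restrict, integral_mul_const, integral_complex_ofReal,
    integral_complex_ofReal, integral_Ioi_sq_div_one_add_pow_four_eq,
    integral_Ioi_one_div_one_add_pow_four]
  push_cast
  ring

lemma integral_Ioc_exp_neg_mul_sq_smul_cexp (u : ℝ) {x : ℝ} (hx : 0 ≤ x) :
    ∫ t in Ioc 0 x, rexp (-t * u ^ 2) • cexp (t * I) =
      (1 - cexp ((I - u ^ 2) * x)) / (u ^ 2 - I) := by
  have hc : I - (u : ℂ) ^ 2 ≠ 0 := by rw [← neg_sub]; exact neg_ne_zero.2 (sq_sub_I_ne_zero u)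
  have hexp (t : ℝ) : rexp (-t * u ^ 2) • cexp (t * I) = cexp ((I - u ^ 2) * t) := by
    rw [Complex.real_smul, ofReal_exp, ← Complex.exp_add]
    push_cast
    ring_nf
  simp_rw [← intervalIntegral.integral_of_le hx, hexp, integral_exp_mul_complex hc]
  rw [ofReal_zero, mul_zero, Complex.exp_zero, div_eq_div_iff hc (sq_sub_I_ne_zero u)]
  ring

lemma norm_cexp_div_sq_sub_I_le (x u : ℝ) :
    ‖cexp ((I - u ^ 2) * x) / (u ^ 2 - I)‖ ≤ rexp (-x * u ^ 2) := by
  rw [norm_div, Complex.norm_exp]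
  refine div_le_of_le_mul₀ (norm_nonneg _) (exp_pos _).le ?_
  have hre : ((I - (u : ℂ) ^ 2) * x).re = -x * u ^ 2 := by
    simp [← ofReal_pow]
    ring
  rw [hre]
  exact le_mul_of_one_le_right (exp_pos _).le (one_le_norm_sq_sub_I u)

lemma norm_integral_Ioi_cexp_div_sq_sub_I_le {x : ℝ} (hx : 0 < x) :
    ‖∫ u in Ioi (0 : ℝ), cexp ((I - u ^ 2) * x) / (u ^ 2 - I)‖ ≤ √π / 2 * (√x)⁻¹ := by
  rw [← integral_Ioi_exp_neg_mul_sq]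
  exact norm_integral_le_of_norm_le (integrable_exp_neg_mul_sq hx).integrableOn
    (.of_forall (norm_cexp_div_sq_sub_I_le x))

lemma integrableOn_inv_sqrt_Ioc (x : ℝ) : IntegrableOn (fun t => (√t)⁻¹) (Ioc 0 x) := by
  refine (intervalIntegral.intervalIntegrable_rpow' (by norm_num : (-1 : ℝ) < -1 / 2)).1.congr_fun
    (fun t (ht : t ∈ Ioc 0 x) => ?_) measurableSet_Ioc
  rw [sqrt_eq_rpow, ← rpow_neg ht.1.le, neg_div]

lemma integrableOn_cexp_mul_I_div_sqrt (x : ℝ) :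
    IntegrableOn (fun t : ℝ => cexp (t * I) / √t) (Ioc 0 x) := by
  refine (integrableOn_inv_sqrt_Ioc x).mono' (by fun_prop : Measurable _).aestronglyMeasurable
    (.of_forall fun t => ?_)
  rw [norm_div, norm_exp_ofReal_mul_I, norm_real, Real.norm_of_nonneg (sqrt_nonneg t), one_div]

lemma integrable_cexp_div_sq_sub_I {x : ℝ} (hx : 0 < x) :
    Integrable fun u : ℝ => cexp ((I - u ^ 2) * x) / (u ^ 2 - I) :=
  (integrable_exp_neg_mul_sq hx).mono'
    ((Continuous.div (by fun_prop) (by fun_prop) sq_sub_I_ne_zero).aestronglyMeasurable)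
    (.of_forall (norm_cexp_div_sq_sub_I_le x))

lemma integral_cexp_mul_I_div_sqrt_eq {x : ℝ} (hx : 0 < x) :
    ∫ t in (0 : ℝ)..x, cexp (t * I) / √t =
      (2 / √π) • ((∫ u in Ioi (0 : ℝ), 1 / ((u : ℂ) ^ 2 - I)) -
        ∫ u in Ioi (0 : ℝ), cexp ((I - u ^ 2) * x) / (u ^ 2 - I)) := by
  have hsmul (t : ℝ) : cexp (t * I) / √t = (√t)⁻¹ • cexp (t * I) := by
    rw [Complex.real_smul, ofReal_inv, inv_mul_eq_div]
  have hint := integrableOn_cexp_mul_I_div_sqrt x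
  simp_rw [hsmul] at hint
  simp_rw [intervalIntegral.integral_of_le hx.le, hsmul]
  rw [integral_inv_sqrt_smul_eq_integral_Ioi_exp_neg_mul_sq_smul measurableSet_Ioc
    (fun t ht => ht.1) hint,
    ← integral_sub integrable_one_div_sq_sub_I.restrict
      (integrable_cexp_div_sq_sub_I hx).restrict]
  congr 1
  refine setIntegral_congr_fun measurableSet_Ioi fun u _ => ?_
  rw [integral_Ioc_exp_neg_mul_sq_smul_cexp u hx.le, sub_div]

theorem tendsto_integral_cexp_mul_I_div_sqrt :
    Tendsto (fun x : ℝ => ∫ t in (0 : ℝ)..x, cexp (t * I) / √t) atTop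
      (𝓝 (√π * cexp (π / 4 * I))) := by
  have hrem : Tendsto (fun x : ℝ => ∫ u in Ioi (0 : ℝ), cexp ((I - u ^ 2) * x) / (u ^ 2 - I))
      atTop (𝓝 0) := by
    refine squeeze_zero_norm' ?_ (by simpa using
      (tendsto_inv_atTop_zero.comp tendsto_sqrt_atTop).const_mul (√π / 2))
    filter_upwards [eventually_gt_atTop 0] with x hx
    exact norm_integral_Ioi_cexp_div_sq_sub_I_le hx
  have hlim : (2 / √π : ℝ) • (π / (2 * √2) * (1 + I) - 0) = √π * cexp (π / 4 * I) := by
    have hπ : (√π : ℂ) ^ 2 = π := by rw [← ofReal_pow, sq_sqrt pi_pos.le]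
    have h2 : (√2 : ℂ) ^ 2 = 2 := by rw [← ofReal_pow, sq_sqrt zero_le_two, ofReal_ofNat]
    have hcos : Complex.cos (π / 4) = (√2 / 2 : ℝ) := by
      rw [← cos_pi_div_four, ofReal_cos]; push_cast; rfl
    have hsin : Complex.sin (π / 4) = (√2 / 2 : ℝ) := by
      rw [← sin_pi_div_four, ofReal_sin]; push_cast; rfl
    rw [exp_mul_I, hcos, hsin, Complex.real_smul]
    have : (√π : ℂ) ≠ 0 := ofReal_ne_zero.2 (sqrt_pos.2 pi_pos).ne'
    have : (√2 : ℂ) ≠ 0 := ofReal_ne_zero.2 (sqrt_pos.2 two_pos).ne'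
    push_cast
    field_simp
    rw [hπ, h2]
    ring
  rw [← hlim, ← integral_Ioi_one_div_sq_sub_I]
  refine ((tendsto_const_nhds.sub hrem).const_smul _).congr' ?_
  filter_upwards [eventually_gt_atTop 0] with x hx
  exact (integral_cexp_mul_I_div_sqrt_eq hx).symm

lemma integral_cos_div_sqrt_eq_re {x : ℝ} (hx : 0 ≤ x) :
    ∫ t in (0 : ℝ)..x, Real.cos t / √t = (∫ t in (0 : ℝ)..x, cexp (t * I) / √t).re := by
  rw [intervalIntegral.integral_of_le hx, intervalIntegral.integral_of_le hx,
    ← RCLike.re_to_complex, ← integral_re (integrableOn_cexp_mul_I_div_sqrt x)]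
  simp [div_ofReal_re, exp_ofReal_mul_I_re]

lemma integral_sin_div_sqrt_eq_im {x : ℝ} (hx : 0 ≤ x) :
    ∫ t in (0 : ℝ)..x, Real.sin t / √t = (∫ t in (0 : ℝ)..x, cexp (t * I) / √t).im := by
  rw [intervalIntegral.integral_of_le hx, intervalIntegral.integral_of_le hx,
    ← RCLike.im_to_complex, ← integral_im (integrableOn_cexp_mul_I_div_sqrt x)]
  simp [div_ofReal_im, exp_ofReal_mul_I_im]

theorem stmt15
    (C S : ℝ → ℝ)
    (hC : ∀ x : ℝ, C x = (1 / Real.sqrt (2 * π)) * ∫ t in (0:ℝ)..x, Real.cos t / Real.sqrt t)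
    (hS : ∀ x : ℝ, S x = (1 / Real.sqrt (2 * π)) * ∫ t in (0:ℝ)..x, Real.sin t / Real.sqrt t) :
    ∃ Ci Si : ℝ, Tendsto C atTop (nhds Ci) ∧ Tendsto S atTop (nhds Si) ∧
      ((Ci : ℂ) + (Si : ℂ) * Complex.I) = Complex.exp (((π / 4 : ℝ) : ℂ) * Complex.I) / (Real.sqrt 2 : ℂ) := by
  have hF := tendsto_integral_cexp_mul_I_div_sqrt
  refine ⟨1 / √(2 * π) * (√π * cexp (π / 4 * I)).re, 1 / √(2 * π) * (√π * cexp (π / 4 * I)).im,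
    ?_, ?_, ?_⟩
  · refine ((continuous_re.tendsto _).comp hF |>.const_mul _).congr' ?_
    filter_upwards [eventually_ge_atTop 0] with x hx
    rw [hC, integral_cos_div_sqrt_eq_re hx, Function.comp_apply]
  · refine ((continuous_im.tendsto _).comp hF |>.const_mul _).congr' ?_
    filter_upwards [eventually_ge_atTop 0] with x hx
    rw [hS, integral_sin_div_sqrt_eq_im hx, Function.comp_apply]
  · have hπ : (√π : ℂ) ≠ 0 := ofReal_ne_zero.2 (sqrt_pos.2 pi_pos).ne'
    push_cast
    rw [mul_assoc, ← mul_add, re_add_im, sqrt_mul zero_le_two]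
    push_cast
    field_simp
end
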